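/- arXiv:2110.02101 — 11 statements merged into one kernel-verified Lean document; each statement's English description precedes it below -/
import Mathlib

section
/- Let G₁ be an edge-regular graph with parameters (n₁, k₁, λ₁) and G₂ an edge-regular graph with parameters (n₂, k₂, λ₂), each containing at least one edge. Then the Cartesian product G₁ □ G₂ is edge-regular with parameters (n₁n₂, k₁+k₂, λ) for some λ if and only if λ₁ = λ₂, in which case λ = λ₁ = λ₂. -/
open SimpleGraph

def SimpleGraph.IsEdgeRegular {V : Type*} [Fintype V] (G : SimpleGraph V) (n k l : ℕ) : Prop :=
  Fintype.card V = n ∧ (∀ v : V, (G.neighborSet v).ncard = k) ∧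
    ∀ u v : V, G.Adj u v → (G.commonNeighbors u v).ncard = l

private lemma commonFst {V₁ V₂ : Type*} (G₁ : SimpleGraph V₁) (G₂ : SimpleGraph V₂)
    {u u' : V₁} (v : V₂) (h : G₁.Adj u u') :
    (G₁ □ G₂).commonNeighbors (u, v) (u', v) = (fun x => (x, v)) '' G₁.commonNeighbors u u' := by
  ext ⟨x, y⟩
  simp only [commonNeighbors, Set.mem_inter_iff, mem_neighborSet, boxProd_adj,
    Set.mem_image, Prod.mk.injEq]
  constructor
  · rintro ⟨(⟨h1, hv⟩ | ⟨h1, rfl⟩), (⟨h2, hv2⟩ | ⟨h2, rfl⟩)⟩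
    · exact ⟨x, ⟨h1, h2⟩, rfl, hv⟩
    · exact absurd (hv ▸ h2) G₂.irrefl
    · exact absurd (hv2 ▸ h1) G₂.irrefl
    · exact absurd rfl h.ne
  · rintro ⟨a, ⟨h1, h2⟩, rfl, rfl⟩
    exact ⟨Or.inl ⟨h1, rfl⟩, Or.inl ⟨h2, rfl⟩⟩

private lemma commonSnd {V₁ V₂ : Type*} (G₁ : SimpleGraph V₁) (G₂ : SimpleGraph V₂)
    (u : V₁) {v v' : V₂} (h : G₂.Adj v v') :
    (G₁ □ G₂).commonNeighbors (u, v) (u, v') = (fun y => (u, y)) '' G₂.commonNeighbors v v' := by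
  ext ⟨x, y⟩
  simp only [commonNeighbors, Set.mem_inter_iff, mem_neighborSet, boxProd_adj,
    Set.mem_image, Prod.mk.injEq]
  constructor
  · rintro ⟨(⟨h1, rfl⟩ | ⟨h1, hv⟩), (⟨h2, rfl⟩ | ⟨h2, hv2⟩)⟩
    · exact absurd rfl h.ne
    · exact absurd (hv2 ▸ h1) G₁.irrefl
    · exact absurd (hv ▸ h2) G₁.irrefl
    · exact ⟨y, ⟨h1, h2⟩, hv, rfl⟩
  · rintro ⟨a, ⟨h1, h2⟩, rfl, rfl⟩
    exact ⟨Or.inr ⟨h1, rfl⟩, Or.inr ⟨h2, rfl⟩⟩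

private lemma commonCard {V₁ V₂ : Type*} [Fintype V₁] [Fintype V₂]
    (G₁ : SimpleGraph V₁) (G₂ : SimpleGraph V₂)
    {u u' : V₁} (v : V₂) (h : G₁.Adj u u') :
    ((G₁ □ G₂).commonNeighbors (u, v) (u', v)).ncard = (G₁.commonNeighbors u u').ncard := by
  rw [commonFst G₁ G₂ v h,
    Set.ncard_image_of_injective _ (fun a b hab => (Prod.mk.injEq _ _ _ _ ▸ hab).1)]

private lemma commonCard' {V₁ V₂ : Type*} [Fintype V₁] [Fintype V₂]
    (G₁ : SimpleGraph V₁) (G₂ : SimpleGraph V₂)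
    (u : V₁) {v v' : V₂} (h : G₂.Adj v v') :
    ((G₁ □ G₂).commonNeighbors (u, v) (u, v')).ncard = (G₂.commonNeighbors v v').ncard := by
  rw [commonSnd G₁ G₂ u h,
    Set.ncard_image_of_injective _ (fun a b hab => (Prod.mk.injEq _ _ _ _ ▸ hab).2)]

private lemma nbhdCard {V₁ V₂ : Type*} [Fintype V₁] [Fintype V₂]
    (G₁ : SimpleGraph V₁) (G₂ : SimpleGraph V₂) (u : V₁) (v : V₂) :
    ((G₁ □ G₂).neighborSet (u, v)).ncard =
      (G₁.neighborSet u).ncard + (G₂.neighborSet v).ncard := by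
  have hset : (G₁ □ G₂).neighborSet (u, v) =
      (fun x => (x, v)) '' G₁.neighborSet u ∪ (fun y => (u, y)) '' G₂.neighborSet v := by
    ext ⟨x, y⟩
    simp only [mem_neighborSet, boxProd_adj, Set.mem_union, Set.mem_image, Prod.mk.injEq]
    constructor
    · rintro (⟨h1, rfl⟩ | ⟨h1, rfl⟩)
      · exact Or.inl ⟨x, h1, rfl, rfl⟩
      · exact Or.inr ⟨y, h1, rfl, rfl⟩
    · rintro (⟨a, h1, rfl, rfl⟩ | ⟨a, h1, rfl, rfl⟩)
      · exact Or.inl ⟨h1, rfl⟩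
      · exact Or.inr ⟨h1, rfl⟩
  rw [hset, Set.ncard_union_eq, Set.ncard_image_of_injective _
      (fun a b hab => (Prod.mk.injEq _ _ _ _ ▸ hab).1),
    Set.ncard_image_of_injective _ (fun a b hab => (Prod.mk.injEq _ _ _ _ ▸ hab).2)]
  · rw [Set.disjoint_left]
    rintro ⟨x, y⟩ ⟨a, ha, rfl, rfl⟩ ⟨b, hb, rfl, rfl⟩
    exact G₁.irrefl ha

/-- the Cartesian product of two edge-regular graphs (each with at least one edge)
is edge-regular with parameters `(n₁n₂, k₁ + k₂, λ)` for some `λ` iff `λ₁ = λ₂`, in which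
case `λ = λ₁ = λ₂`. -/
theorem stmt_1 {V₁ V₂ : Type*} [Fintype V₁] [Fintype V₂]
    (G₁ : SimpleGraph V₁) (G₂ : SimpleGraph V₂) (n₁ k₁ l₁ n₂ k₂ l₂ : ℕ)
    (h₁ : G₁.IsEdgeRegular n₁ k₁ l₁) (h₂ : G₂.IsEdgeRegular n₂ k₂ l₂)
    (he₁ : ∃ a b : V₁, G₁.Adj a b) (he₂ : ∃ a b : V₂, G₂.Adj a b) :
    ((∃ l : ℕ, (G₁ □ G₂).IsEdgeRegular (n₁ * n₂) (k₁ + k₂) l) ↔ l₁ = l₂) ∧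
      (l₁ = l₂ → (G₁ □ G₂).IsEdgeRegular (n₁ * n₂) (k₁ + k₂) l₁) := by
  obtain ⟨a₁, b₁, hab₁⟩ := he₁
  obtain ⟨a₂, b₂, hab₂⟩ := he₂
  have key : ∀ hl : l₁ = l₂, (G₁ □ G₂).IsEdgeRegular (n₁ * n₂) (k₁ + k₂) l₁ := by
    intro hl
    refine ⟨by rw [Fintype.card_prod, h₁.1, h₂.1], fun ⟨u, v⟩ => by
      rw [nbhdCard, h₁.2.1, h₂.2.1], fun ⟨u, v⟩ ⟨u', v'⟩ hadj => ?_⟩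
    rcases hadj with ⟨h, rfl⟩ | ⟨h, rfl⟩
    · rw [commonCard G₁ G₂ _ h, h₁.2.2 _ _ h]
    · rw [commonCard' G₁ G₂ _ h, h₂.2.2 _ _ h, hl]
  refine ⟨⟨fun ⟨l, hl⟩ => ?_, fun hl => ⟨l₁, key hl⟩⟩, key⟩
  have e1 : l = l₁ := by
    rw [← hl.2.2 (a₁, a₂) (b₁, a₂) (Or.inl ⟨hab₁, rfl⟩), commonCard G₁ G₂ _ hab₁,
      h₁.2.2 _ _ hab₁]
  have e2 : l = l₂ := by
    rw [← hl.2.2 (a₁, a₂) (a₁, b₂) (Or.inr ⟨hab₂, rfl⟩), commonCard' G₁ G₂ _ hab₂,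
      h₂.2.2 _ _ hab₂]
  omega
end

section
/- Let G₁ be a pseudo strongly regular graph with parameters (n₁, k₁, μ₁) and G₂ a pseudo strongly regular graph with parameters (n₂, k₂, μ₂), where neither G₁ nor G₂ is complete (each contains a pair of distinct non-adjacent vertices) and n₂ ≥ 1. Then the lexicographic product (composition) G₁[G₂] is pseudo strongly regular (for some parameter μ) if and only if μ₁ = k₁ and μ₂ = 0. -/
open SimpleGraph

def SimpleGraph.IsPseudoSRG {V : Type*} [Fintype V] (G : SimpleGraph V) (n k m : ℕ) : Prop :=
  Fintype.card V = n ∧ (∀ v : V, (G.neighborSet v).ncard = k) ∧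
    ∀ u v : V, u ≠ v → ¬G.Adj u v → (G.commonNeighbors u v).ncard = m

/-- The lexicographic product (composition) of two simple graphs. -/
def SimpleGraph.lexProd {V₁ V₂ : Type*} (G₁ : SimpleGraph V₁) (G₂ : SimpleGraph V₂) :
    SimpleGraph (V₁ × V₂) where
  Adj x y := G₁.Adj x.1 y.1 ∨ (x.1 = y.1 ∧ G₂.Adj x.2 y.2)
  symm := ⟨fun (x y : V₁ × V₂) (h : G₁.Adj x.1 y.1 ∨ (x.1 = y.1 ∧ G₂.Adj x.2 y.2)) => h.elim (fun h => Or.inl h.symm) (fun h => Or.inr ⟨h.1.symm, h.2.symm⟩)⟩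
  loopless := ⟨fun (x : V₁ × V₂) (h : G₁.Adj x.1 x.1 ∨ (x.1 = x.1 ∧ G₂.Adj x.2 x.2)) => h.elim (fun h => G₁.loopless.irrefl _ h) (fun h => G₂.loopless.irrefl _ h.2)⟩

/-!
Two non-adjacent vertices of `G₁[G₂]` either lie over non-adjacent vertices `u ≠ u'` of `G₁`,
and then their common neighbours are the `μ₁ n₂` vertices over common neighbours of `u` and `u'`,
or they lie in the fibre over one vertex `u`, over non-adjacent vertices of `G₂`, and then their
common neighbours are the `k₁ n₂` vertices over neighbours of `u` together with `μ₂` vertices of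
the fibre. Both kinds of pair occur, and `G₁[G₂]` is always `(k₁ n₂ + k₂)`-regular, so it is
pseudo strongly regular exactly when `μ₁ n₂ = k₁ n₂ + μ₂`; as `μ₁ ≤ k₁`, this means `μ₁ = k₁` and `μ₂ = 0`.
-/

namespace SimpleGraph

open Set

section LexProd

variable {V₁ V₂ : Type*} {G₁ : SimpleGraph V₁} {G₂ : SimpleGraph V₂}

@[simp]
lemma lexProd_adj {x y : V₁ × V₂} :
    (G₁.lexProd G₂).Adj x y ↔ G₁.Adj x.1 y.1 ∨ (x.1 = y.1 ∧ G₂.Adj x.2 y.2) :=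
  Iff.rfl

lemma neighborSet_lexProd (u : V₁) (v : V₂) :
    (G₁.lexProd G₂).neighborSet (u, v) =
      G₁.neighborSet u ×ˢ univ ∪ {u} ×ˢ G₂.neighborSet v := by
  ext ⟨w, x⟩
  simp [eq_comm]

lemma commonNeighbors_lexProd_of_not_adj {u u' : V₁} (hne : u ≠ u') (hna : ¬G₁.Adj u u')
    (v v' : V₂) :
    (G₁.lexProd G₂).commonNeighbors (u, v) (u', v') = G₁.commonNeighbors u u' ×ˢ univ := by
  ext ⟨w, x⟩
  simp only [mem_commonNeighbors, lexProd_adj, mem_prod, mem_univ, and_true]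
  constructor
  · rintro ⟨h | ⟨rfl, -⟩, h' | ⟨rfl, -⟩⟩
    · exact ⟨h, h'⟩
    · exact absurd h hna
    · exact absurd h'.symm hna
    · exact absurd rfl hne
  · rintro ⟨h, h'⟩
    exact ⟨Or.inl h, Or.inl h'⟩

lemma commonNeighbors_lexProd_of_fst_eq (u : V₁) {v v' : V₂} :
    (G₁.lexProd G₂).commonNeighbors (u, v) (u, v') =
      G₁.neighborSet u ×ˢ univ ∪ {u} ×ˢ G₂.commonNeighbors v v' := by
  ext ⟨w, x⟩
  simp only [mem_commonNeighbors, lexProd_adj, mem_union, mem_prod, mem_neighborSet,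
    mem_univ, and_true, mem_singleton_iff]
  constructor
  · rintro ⟨h | ⟨rfl, hx⟩, h | ⟨-, hx'⟩⟩
    · exact Or.inl h
    · exact Or.inl h
    · exact absurd h (G₁.loopless.irrefl u)
    · exact Or.inr ⟨rfl, hx, hx'⟩
  · rintro (h | ⟨rfl, hx, hx'⟩)
    · exact ⟨Or.inl h, Or.inl h⟩
    · exact ⟨Or.inr ⟨rfl, hx⟩, Or.inr ⟨rfl, hx'⟩⟩

lemma ncard_neighborSet_prod_univ_union [Finite V₁] [Finite V₂] (u : V₁) (t : Set V₂) :
    (G₁.neighborSet u ×ˢ univ ∪ {u} ×ˢ t).ncard =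
      (G₁.neighborSet u).ncard * Nat.card V₂ + t.ncard := by
  have hdisj : Disjoint (G₁.neighborSet u ×ˢ (univ : Set V₂)) ({u} ×ˢ t) :=
    disjoint_prod.2 (Or.inl (disjoint_singleton_right.2 G₁.notMem_neighborSet_self))
  rw [ncard_union_eq hdisj, ncard_prod, ncard_prod, ncard_univ, ncard_singleton, one_mul]

lemma ncard_neighborSet_lexProd [Finite V₁] [Finite V₂] (u : V₁) (v : V₂) :
    ((G₁.lexProd G₂).neighborSet (u, v)).ncard =
      (G₁.neighborSet u).ncard * Nat.card V₂ + (G₂.neighborSet v).ncard := by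
  rw [neighborSet_lexProd, ncard_neighborSet_prod_univ_union]

lemma ncard_commonNeighbors_lexProd_of_not_adj {u u' : V₁} (hne : u ≠ u')
    (hna : ¬G₁.Adj u u') (v v' : V₂) :
    ((G₁.lexProd G₂).commonNeighbors (u, v) (u', v')).ncard =
      (G₁.commonNeighbors u u').ncard * Nat.card V₂ := by
  rw [commonNeighbors_lexProd_of_not_adj hne hna, ncard_prod, ncard_univ]

lemma ncard_commonNeighbors_lexProd_of_fst_eq [Finite V₁] [Finite V₂] (u : V₁) (v v' : V₂) :
    ((G₁.lexProd G₂).commonNeighbors (u, v) (u, v')).ncard =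
      (G₁.neighborSet u).ncard * Nat.card V₂ + (G₂.commonNeighbors v v').ncard := by
  rw [commonNeighbors_lexProd_of_fst_eq, ncard_neighborSet_prod_univ_union]

end LexProd

namespace IsPseudoSRG

variable {V V₁ V₂ : Type*} [Fintype V] [Fintype V₁] [Fintype V₂] {G : SimpleGraph V}
  {G₁ : SimpleGraph V₁} {G₂ : SimpleGraph V₂} {n k m n₁ k₁ m₁ n₂ k₂ m₂ : ℕ}

lemma natCard_eq (h : G.IsPseudoSRG n k m) : Nat.card V = n := by
  rw [Nat.card_eq_fintype_card, h.1]

lemma le_of_ne_of_not_adj (h : G.IsPseudoSRG n k m) {a b : V} (hab : a ≠ b)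
    (hna : ¬G.Adj a b) : m ≤ k := by
  rw [← h.2.2 a b hab hna, ← h.2.1 a]
  exact ncard_le_ncard (fun _ hw => hw.1)

lemma lexProd (h₁ : G₁.IsPseudoSRG n₁ k₁ k₁) (h₂ : G₂.IsPseudoSRG n₂ k₂ 0) :
    (G₁.lexProd G₂).IsPseudoSRG (n₁ * n₂) (k₁ * n₂ + k₂) (k₁ * n₂) := by
  refine ⟨by rw [Fintype.card_prod, h₁.1, h₂.1], ?_, ?_⟩
  · rintro ⟨u, v⟩
    rw [ncard_neighborSet_lexProd, h₁.2.1, h₂.natCard_eq, h₂.2.1]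
  · rintro ⟨u, v⟩ ⟨u', v'⟩ hne hna
    rcases eq_or_ne u u' with rfl | huu
    · have hvv : v ≠ v' := fun h => hne (by rw [h])
      have hnv : ¬G₂.Adj v v' := fun h => hna (Or.inr ⟨rfl, h⟩)
      rw [ncard_commonNeighbors_lexProd_of_fst_eq, h₁.2.1, h₂.natCard_eq, h₂.2.2 v v' hvv hnv,
        add_zero]
    · rw [ncard_commonNeighbors_lexProd_of_not_adj huu (fun h => hna (Or.inl h)),
        h₁.2.2 u u' huu (fun h => hna (Or.inl h)), h₂.natCard_eq]

lemma eq_of_lexProd (h₁ : G₁.IsPseudoSRG n₁ k₁ m₁) (h₂ : G₂.IsPseudoSRG n₂ k₂ m₂)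
    (hnc₁ : ∃ a b : V₁, a ≠ b ∧ ¬G₁.Adj a b) (hnc₂ : ∃ a b : V₂, a ≠ b ∧ ¬G₂.Adj a b)
    {n k m : ℕ} (h : (G₁.lexProd G₂).IsPseudoSRG n k m) : m₁ = k₁ ∧ m₂ = 0 := by
  obtain ⟨a, b, hab, hnab⟩ := hnc₁
  obtain ⟨c, d, hcd, hncd⟩ := hnc₂
  have hm_fibres : m = m₁ * n₂ := by
    rw [← h.2.2 (a, c) (b, c) (by simp [hab]) (by simp [hab, hnab]),
      ncard_commonNeighbors_lexProd_of_not_adj hab hnab, h₁.2.2 a b hab hnab, h₂.natCard_eq]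
  have hm_fibre : m = k₁ * n₂ + m₂ := by
    rw [← h.2.2 (a, c) (a, d) (by simp [hcd]) (by simp [hncd]),
      ncard_commonNeighbors_lexProd_of_fst_eq, h₁.2.1, h₂.natCard_eq, h₂.2.2 c d hcd hncd]
  have hn₂ : 0 < n₂ := h₂.natCard_eq ▸ Nat.card_pos_iff.2 ⟨⟨c⟩, inferInstance⟩
  have hle : m₁ * n₂ ≤ k₁ * n₂ := Nat.mul_le_mul_right n₂ (h₁.le_of_ne_of_not_adj hab hnab)
  have hm₂ : m₂ = 0 := by omega
  exact ⟨Nat.eq_of_mul_eq_mul_right hn₂ (by omega), hm₂⟩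

end IsPseudoSRG

end SimpleGraph

theorem stmt_5_general {V₁ V₂ : Type*} [Fintype V₁] [Fintype V₂]
    (G₁ : SimpleGraph V₁) (G₂ : SimpleGraph V₂) (n₁ k₁ m₁ n₂ k₂ m₂ : ℕ)
    (h₁ : G₁.IsPseudoSRG n₁ k₁ m₁) (h₂ : G₂.IsPseudoSRG n₂ k₂ m₂)
    (hnc₁ : ∃ a b : V₁, a ≠ b ∧ ¬G₁.Adj a b) (hnc₂ : ∃ a b : V₂, a ≠ b ∧ ¬G₂.Adj a b) :
    (∃ k m : ℕ, (G₁.lexProd G₂).IsPseudoSRG (n₁ * n₂) k m) ↔ (m₁ = k₁ ∧ m₂ = 0) := by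
  constructor
  · rintro ⟨k, m, h⟩
    exact h₁.eq_of_lexProd h₂ hnc₁ hnc₂ h
  · rintro ⟨rfl, rfl⟩
    exact ⟨_, _, h₁.lexProd h₂⟩

/-- for pseudo strongly regular, non-complete `G₁, G₂` with `n₂ ≥ 1`, the
lexicographic product `G₁[G₂]` is pseudo strongly regular (for some parameter `μ`) iff
`μ₁ = k₁` and `μ₂ = 0`. -/
theorem stmt_5 {V₁ V₂ : Type*} [Fintype V₁] [Fintype V₂]
    (G₁ : SimpleGraph V₁) (G₂ : SimpleGraph V₂) (n₁ k₁ m₁ n₂ k₂ m₂ : ℕ)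
    (h₁ : G₁.IsPseudoSRG n₁ k₁ m₁) (h₂ : G₂.IsPseudoSRG n₂ k₂ m₂)
    (hnc₁ : ∃ a b : V₁, a ≠ b ∧ ¬G₁.Adj a b) (hnc₂ : ∃ a b : V₂, a ≠ b ∧ ¬G₂.Adj a b)
    (hn₂ : 1 ≤ n₂) :
    (∃ k m : ℕ, (G₁.lexProd G₂).IsPseudoSRG (n₁ * n₂) k m) ↔ (m₁ = k₁ ∧ m₂ = 0) :=
  stmt_5_general G₁ G₂ n₁ k₁ m₁ n₂ k₂ m₂ h₁ h₂ hnc₁ hnc₂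
end

section
/- Let G₁ be an edge-regular graph with parameters (n₁, k₁, λ₁) and G₂ an edge-regular graph with parameters (n₂, k₂, λ₂), each containing at least one edge. Then the strong product G₁ ⊠ G₂ is edge-regular with parameters (n₁n₂, k₁+k₂+k₁k₂, λ) for some λ if and only if λ₂ + k₁λ₂ + 2k₁ = λ₁ + k₂λ₁ + 2k₂ = λ₁λ₂ + 2λ₂ + 2λ₁ + 2, in which case λ equals this common value. -/
open SimpleGraph

/-- The strong (normal) product of two simple graphs. -/
def SimpleGraph.strongProd {V₁ V₂ : Type*} (G₁ : SimpleGraph V₁) (G₂ : SimpleGraph V₂) :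
    SimpleGraph (V₁ × V₂) where
  Adj x y := (x.1 = y.1 ∧ G₂.Adj x.2 y.2) ∨ (x.2 = y.2 ∧ G₁.Adj x.1 y.1) ∨
    (G₁.Adj x.1 y.1 ∧ G₂.Adj x.2 y.2)
  symm := ⟨fun _ _ h => by
    rcases h with h | h | h
    · exact Or.inl ⟨h.1.symm, h.2.symm⟩
    · exact Or.inr (Or.inl ⟨h.1.symm, h.2.symm⟩)
    · exact Or.inr (Or.inr ⟨h.1.symm, h.2.symm⟩)⟩
  loopless := ⟨fun x h => by
    rcases h with h | h | h
    · exact G₂.loopless.irrefl _ h.2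
    · exact G₁.loopless.irrefl _ h.2
    · exact G₁.loopless.irrefl _ h.1⟩

/-!
The closed neighbourhood `N[x]` of a vertex `(x₁, x₂)` of `G₁ ⊠ G₂` is `N[x₁] ×ˢ N[x₂]`, and for
adjacent `u, v` in any graph `N[u] ∩ N[v]` consists of `u`, `v` and their common neighbours. Hence
the product is `(k₁ + 1)(k₂ + 1) - 1`-regular, and an edge of the product has
`|N[x₁] ∩ N[y₁]| · |N[x₂] ∩ N[y₂]| - 2` common neighbours, where each factor is `k + 1` or `λ + 2`
according as the coordinates agree or are adjacent. The three kinds of edges give the three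
displayed expressions, and all three kinds occur as soon as both factors have an edge.
-/

namespace SimpleGraph

section ClosedNeighborSet

variable {V : Type*} (G : SimpleGraph V)

def closedNeighborSet (v : V) : Set V := insert v (G.neighborSet v)

variable {G}

@[simp]
lemma mem_closedNeighborSet {v w : V} : w ∈ G.closedNeighborSet v ↔ w = v ∨ G.Adj v w :=
  Iff.rfl

lemma ncard_closedNeighborSet [Finite V] (v : V) :
    (G.closedNeighborSet v).ncard = (G.neighborSet v).ncard + 1 :=
  Set.ncard_insert_of_notMem (by simp)

lemma commonNeighbors_eq_closedNeighborSet_inter_sdiff (u v : V) :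
    G.commonNeighbors u v = (G.closedNeighborSet u ∩ G.closedNeighborSet v) \ {u, v} := by
  ext w
  simp only [mem_commonNeighbors, Set.mem_sdiff, Set.mem_inter_iff, mem_closedNeighborSet,
    Set.mem_insert_iff, Set.mem_singleton_iff]
  constructor
  · rintro ⟨hu, hv⟩
    exact ⟨⟨Or.inr hu, Or.inr hv⟩, by rintro (rfl | rfl) <;> simp_all⟩
  · rintro ⟨⟨hu | hu, hv | hv⟩, hne⟩ <;> tauto

lemma ncard_closedNeighborSet_inter_of_adj [Finite V] {u v : V} (h : G.Adj u v) :
    (G.closedNeighborSet u ∩ G.closedNeighborSet v).ncard = (G.commonNeighbors u v).ncard + 2 := by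
  have hsub : {u, v} ⊆ G.closedNeighborSet u ∩ G.closedNeighborSet v := by
    rintro w (rfl | rfl)
    · exact ⟨Or.inl rfl, Or.inr h.symm⟩
    · exact ⟨Or.inr h, Or.inl rfl⟩
  rw [commonNeighbors_eq_closedNeighborSet_inter_sdiff, ← Set.ncard_pair h.ne,
    Set.ncard_sdiff_add_ncard_of_subset hsub]

end ClosedNeighborSet

section StrongProd

variable {V₁ V₂ : Type*} {G₁ : SimpleGraph V₁} {G₂ : SimpleGraph V₂}

lemma closedNeighborSet_strongProd (x : V₁ × V₂) :
    (G₁.strongProd G₂).closedNeighborSet x =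
      G₁.closedNeighborSet x.1 ×ˢ G₂.closedNeighborSet x.2 := by
  obtain ⟨x₁, x₂⟩ := x
  ext ⟨y₁, y₂⟩
  simp only [mem_closedNeighborSet, strongProd, Set.mem_prod, Prod.mk.injEq]
  constructor
  · rintro (⟨rfl, rfl⟩ | ⟨rfl, h⟩ | ⟨rfl, h⟩ | ⟨h₁, h₂⟩) <;> simp_all
  · rintro ⟨rfl | h₁, rfl | h₂⟩ <;> simp_all

lemma ncard_neighborSet_strongProd [Finite V₁] [Finite V₂] (x : V₁ × V₂) :
    ((G₁.strongProd G₂).neighborSet x).ncard + 1 =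
      ((G₁.neighborSet x.1).ncard + 1) * ((G₂.neighborSet x.2).ncard + 1) := by
  rw [← ncard_closedNeighborSet, closedNeighborSet_strongProd, Set.ncard_prod,
    ncard_closedNeighborSet, ncard_closedNeighborSet]

lemma ncard_commonNeighbors_strongProd_add_two [Finite V₁] [Finite V₂] {x y : V₁ × V₂}
    (h : (G₁.strongProd G₂).Adj x y) :
    ((G₁.strongProd G₂).commonNeighbors x y).ncard + 2 =
      (G₁.closedNeighborSet x.1 ∩ G₁.closedNeighborSet y.1).ncard *
        (G₂.closedNeighborSet x.2 ∩ G₂.closedNeighborSet y.2).ncard := by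
  rw [← ncard_closedNeighborSet_inter_of_adj h, closedNeighborSet_strongProd,
    closedNeighborSet_strongProd, Set.prod_inter_prod, Set.ncard_prod]

end StrongProd

namespace IsEdgeRegular

section

variable {V : Type*} [Fintype V] {G : SimpleGraph V} {n k l : ℕ}

lemma ncard_closedNeighborSet_eq (h : G.IsEdgeRegular n k l) (v : V) :
    (G.closedNeighborSet v).ncard = k + 1 := by
  rw [SimpleGraph.ncard_closedNeighborSet, h.2.1]

lemma ncard_closedNeighborSet_inter_eq (h : G.IsEdgeRegular n k l) {u v : V} (huv : G.Adj u v) :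
    (G.closedNeighborSet u ∩ G.closedNeighborSet v).ncard = l + 2 := by
  rw [ncard_closedNeighborSet_inter_of_adj huv, h.2.2 u v huv]

end

variable {V₁ V₂ : Type*} [Fintype V₁] [Fintype V₂] {G₁ : SimpleGraph V₁} {G₂ : SimpleGraph V₂}
  {n₁ k₁ l₁ n₂ k₂ l₂ : ℕ} (h₁ : G₁.IsEdgeRegular n₁ k₁ l₁) (h₂ : G₂.IsEdgeRegular n₂ k₂ l₂)
include h₁ h₂

lemma ncard_neighborSet_strongProd_eq (x : V₁ × V₂) :
    ((G₁.strongProd G₂).neighborSet x).ncard = k₁ + k₂ + k₁ * k₂ := by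
  have h := ncard_neighborSet_strongProd (G₁ := G₁) (G₂ := G₂) x
  rw [h₁.2.1, h₂.2.1] at h
  linarith

lemma ncard_commonNeighbors_strongProd_of_fst_eq {x y : V₁ × V₂} (e : x.1 = y.1)
    (hadj : G₂.Adj x.2 y.2) :
    ((G₁.strongProd G₂).commonNeighbors x y).ncard = l₂ + k₁ * l₂ + 2 * k₁ := by
  have h := ncard_commonNeighbors_strongProd_add_two (G₁ := G₁) (Or.inl ⟨e, hadj⟩)
  rw [e, Set.inter_self, h₁.ncard_closedNeighborSet_eq, h₂.ncard_closedNeighborSet_inter_eq hadj]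
    at h
  linarith

lemma ncard_commonNeighbors_strongProd_of_snd_eq {x y : V₁ × V₂} (e : x.2 = y.2)
    (hadj : G₁.Adj x.1 y.1) :
    ((G₁.strongProd G₂).commonNeighbors x y).ncard = l₁ + k₂ * l₁ + 2 * k₂ := by
  have h := ncard_commonNeighbors_strongProd_add_two (G₂ := G₂) (Or.inr (Or.inl ⟨e, hadj⟩))
  rw [e, Set.inter_self, h₂.ncard_closedNeighborSet_eq, h₁.ncard_closedNeighborSet_inter_eq hadj]
    at h
  linarith

lemma ncard_commonNeighbors_strongProd_of_adj_of_adj {x y : V₁ × V₂} (hadj₁ : G₁.Adj x.1 y.1)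
    (hadj₂ : G₂.Adj x.2 y.2) :
    ((G₁.strongProd G₂).commonNeighbors x y).ncard = l₁ * l₂ + 2 * l₂ + 2 * l₁ + 2 := by
  have h := ncard_commonNeighbors_strongProd_add_two (Or.inr (Or.inr ⟨hadj₁, hadj₂⟩))
  rw [h₁.ncard_closedNeighborSet_inter_eq hadj₁, h₂.ncard_closedNeighborSet_inter_eq hadj₂] at h
  linarith

lemma strongProd {l : ℕ} (hfst : l₂ + k₁ * l₂ + 2 * k₁ = l) (hsnd : l₁ + k₂ * l₁ + 2 * k₂ = l)
    (hboth : l₁ * l₂ + 2 * l₂ + 2 * l₁ + 2 = l) :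
    (G₁.strongProd G₂).IsEdgeRegular (n₁ * n₂) (k₁ + k₂ + k₁ * k₂) l := by
  refine ⟨by rw [Fintype.card_prod, h₁.1, h₂.1], ncard_neighborSet_strongProd_eq h₁ h₂, ?_⟩
  rintro x y (⟨e, hadj⟩ | ⟨e, hadj⟩ | ⟨hadj₁, hadj₂⟩)
  · rw [ncard_commonNeighbors_strongProd_of_fst_eq h₁ h₂ e hadj, hfst]
  · rw [ncard_commonNeighbors_strongProd_of_snd_eq h₁ h₂ e hadj, hsnd]
  · rw [ncard_commonNeighbors_strongProd_of_adj_of_adj h₁ h₂ hadj₁ hadj₂, hboth]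

lemma eq_of_strongProd {n k l : ℕ} (h : (G₁.strongProd G₂).IsEdgeRegular n k l)
    {a b : V₁} (hab : G₁.Adj a b) {c d : V₂} (hcd : G₂.Adj c d) :
    l₂ + k₁ * l₂ + 2 * k₁ = l ∧ l₁ + k₂ * l₁ + 2 * k₂ = l ∧
      l₁ * l₂ + 2 * l₂ + 2 * l₁ + 2 = l := by
  refine ⟨?_, ?_, ?_⟩
  · rw [← ncard_commonNeighbors_strongProd_of_fst_eq h₁ h₂ (x := (a, c)) (y := (a, d)) rfl hcd]
    exact h.2.2 _ _ (Or.inl ⟨rfl, hcd⟩)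
  · rw [← ncard_commonNeighbors_strongProd_of_snd_eq h₁ h₂ (x := (a, c)) (y := (b, c)) rfl hab]
    exact h.2.2 _ _ (Or.inr (Or.inl ⟨rfl, hab⟩))
  · rw [← ncard_commonNeighbors_strongProd_of_adj_of_adj h₁ h₂ (x := (a, c)) (y := (b, d)) hab hcd]
    exact h.2.2 _ _ (Or.inr (Or.inr ⟨hab, hcd⟩))

end IsEdgeRegular

end SimpleGraph

/-- the strong product of two edge-regular graphs (each with at least one edge) is
edge-regular with parameters `(n₁n₂, k₁ + k₂ + k₁k₂, λ)` for some `λ` iff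
`λ₂ + k₁λ₂ + 2k₁ = λ₁ + k₂λ₁ + 2k₂ = λ₁λ₂ + 2λ₂ + 2λ₁ + 2`, in which case `λ` is this
common value. -/
theorem stmt_6 {V₁ V₂ : Type*} [Fintype V₁] [Fintype V₂]
    (G₁ : SimpleGraph V₁) (G₂ : SimpleGraph V₂) (n₁ k₁ l₁ n₂ k₂ l₂ : ℕ)
    (h₁ : G₁.IsEdgeRegular n₁ k₁ l₁) (h₂ : G₂.IsEdgeRegular n₂ k₂ l₂)
    (he₁ : ∃ a b : V₁, G₁.Adj a b) (he₂ : ∃ a b : V₂, G₂.Adj a b) :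
    ((∃ l : ℕ, (G₁.strongProd G₂).IsEdgeRegular (n₁ * n₂) (k₁ + k₂ + k₁ * k₂) l) ↔
        (l₂ + k₁ * l₂ + 2 * k₁ = l₁ + k₂ * l₁ + 2 * k₂ ∧
          l₁ + k₂ * l₁ + 2 * k₂ = l₁ * l₂ + 2 * l₂ + 2 * l₁ + 2)) ∧
      ((l₂ + k₁ * l₂ + 2 * k₁ = l₁ + k₂ * l₁ + 2 * k₂ ∧
          l₁ + k₂ * l₁ + 2 * k₂ = l₁ * l₂ + 2 * l₂ + 2 * l₁ + 2) →
        (G₁.strongProd G₂).IsEdgeRegular (n₁ * n₂) (k₁ + k₂ + k₁ * k₂)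
          (l₂ + k₁ * l₂ + 2 * k₁)) := by
  obtain ⟨a, b, hab⟩ := he₁
  obtain ⟨c, d, hcd⟩ := he₂
  have of_eqs : l₂ + k₁ * l₂ + 2 * k₁ = l₁ + k₂ * l₁ + 2 * k₂ ∧
      l₁ + k₂ * l₁ + 2 * k₂ = l₁ * l₂ + 2 * l₂ + 2 * l₁ + 2 →
      (G₁.strongProd G₂).IsEdgeRegular (n₁ * n₂) (k₁ + k₂ + k₁ * k₂) (l₂ + k₁ * l₂ + 2 * k₁) :=
    fun ⟨e₁, e₂⟩ => h₁.strongProd h₂ rfl e₁.symm (e₁.trans e₂).symm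
  refine ⟨⟨fun ⟨l, h⟩ => ?_, fun he => ⟨_, of_eqs he⟩⟩, of_eqs⟩
  obtain ⟨hfst, hsnd, hboth⟩ := h₁.eq_of_strongProd h₂ h hab hcd
  exact ⟨hfst.trans hsnd.symm, hsnd.trans hboth.symm⟩
end

section
/- Let G₁ be an edge-regular graph with parameters (n₁, k₁, λ₁) and G₂ an edge-regular graph with parameters (n₂, k₂, λ₂), each containing at least one edge, with n₁ ≥ 1 and n₂ ≥ 1. Then the join G₁ ∨ G₂ is edge-regular with parameters (n₁+n₂, k, λ) for some k and λ if and only if k₁ + n₂ = k₂ + n₁ and λ₁ + n₂ = λ₂ + n₁ = k₁ + k₂, in which case k = k₁ + n₂ and λ = k₁ + k₂. -/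
open SimpleGraph

/-- The join of two simple graphs on disjoint vertex sets. -/
def SimpleGraph.joinGraph {V₁ V₂ : Type*} (G₁ : SimpleGraph V₁) (G₂ : SimpleGraph V₂) :
    SimpleGraph (V₁ ⊕ V₂) where
  Adj x y := match x, y with
    | Sum.inl a, Sum.inl b => G₁.Adj a b
    | Sum.inr a, Sum.inr b => G₂.Adj a b
    | Sum.inl _, Sum.inr _ => True
    | Sum.inr _, Sum.inl _ => True
  symm := ⟨by rintro (a | a) (b | b) h <;> first | exact h.symm | trivial⟩
  loopless := ⟨by rintro (a | a) h <;> simp_all [SimpleGraph.irrefl]⟩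

/-!
Every vertex of one side is adjacent to every vertex of the other, so each neighbourhood and
each common neighbourhood in `G₁ ∨ G₂` is the disjoint union of a neighbourhood or common
neighbourhood in one factor with either a whole side or a neighbourhood of the other factor.
Counting gives degree `k₁ + n₂` on the left, `k₂ + n₁` on the right, and `λ` equal to
`λ₁ + n₂` on left edges, `λ₂ + n₁` on right edges and `k₁ + k₂` on cross edges. The join is
edge-regular exactly when these agree; each of the five values is attained because both sides
have an edge.
-/

theorem Set.ncard_image_inl_union_image_inr {α β : Type*} [Finite α] [Finite β]
    (s : Set α) (t : Set β) :
    (Sum.inl '' s ∪ Sum.inr '' t : Set (α ⊕ β)).ncard = s.ncard + t.ncard := by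
  rw [Set.ncard_union_eq Set.disjoint_image_inl_image_inr,
    Set.ncard_image_of_injective _ Sum.inl_injective,
    Set.ncard_image_of_injective _ Sum.inr_injective]

namespace SimpleGraph

variable {V₁ V₂ : Type*} (G₁ : SimpleGraph V₁) (G₂ : SimpleGraph V₂)

theorem neighborSet_joinGraph_inl (a : V₁) :
    (G₁.joinGraph G₂).neighborSet (Sum.inl a) =
      Sum.inl '' G₁.neighborSet a ∪ Sum.inr '' Set.univ := by
  ext (x | x) <;> simp [joinGraph]

theorem neighborSet_joinGraph_inr (b : V₂) :
    (G₁.joinGraph G₂).neighborSet (Sum.inr b) =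
      Sum.inl '' Set.univ ∪ Sum.inr '' G₂.neighborSet b := by
  ext (x | x) <;> simp [joinGraph]

theorem commonNeighbors_joinGraph_inl_inl (a b : V₁) :
    (G₁.joinGraph G₂).commonNeighbors (Sum.inl a) (Sum.inl b) =
      Sum.inl '' G₁.commonNeighbors a b ∪ Sum.inr '' Set.univ := by
  ext (x | x) <;> simp [joinGraph, commonNeighbors]

theorem commonNeighbors_joinGraph_inr_inr (a b : V₂) :
    (G₁.joinGraph G₂).commonNeighbors (Sum.inr a) (Sum.inr b) =
      Sum.inl '' Set.univ ∪ Sum.inr '' G₂.commonNeighbors a b := by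
  ext (x | x) <;> simp [joinGraph, commonNeighbors]

theorem commonNeighbors_joinGraph_inl_inr (a : V₁) (b : V₂) :
    (G₁.joinGraph G₂).commonNeighbors (Sum.inl a) (Sum.inr b) =
      Sum.inl '' G₁.neighborSet a ∪ Sum.inr '' G₂.neighborSet b := by
  ext (x | x) <;> simp [joinGraph, commonNeighbors]

theorem IsEdgeRegular.natCard_eq {V : Type*} [Fintype V] {G : SimpleGraph V} {n k l : ℕ}
    (h : G.IsEdgeRegular n k l) : Nat.card V = n := by
  rw [Nat.card_eq_fintype_card, h.1]

section EdgeRegular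

variable [Fintype V₁] [Fintype V₂] {G₁ G₂} {n₁ k₁ l₁ n₂ k₂ l₂ : ℕ}

theorem IsEdgeRegular.ncard_neighborSet_joinGraph_inl
    (h₁ : G₁.IsEdgeRegular n₁ k₁ l₁) (h₂ : G₂.IsEdgeRegular n₂ k₂ l₂) (a : V₁) :
    ((G₁.joinGraph G₂).neighborSet (Sum.inl a)).ncard = k₁ + n₂ := by
  rw [neighborSet_joinGraph_inl, Set.ncard_image_inl_union_image_inr, h₁.2.1 a,
    Set.ncard_univ, h₂.natCard_eq]

theorem IsEdgeRegular.ncard_neighborSet_joinGraph_inr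
    (h₁ : G₁.IsEdgeRegular n₁ k₁ l₁) (h₂ : G₂.IsEdgeRegular n₂ k₂ l₂) (b : V₂) :
    ((G₁.joinGraph G₂).neighborSet (Sum.inr b)).ncard = k₂ + n₁ := by
  rw [neighborSet_joinGraph_inr, Set.ncard_image_inl_union_image_inr, h₂.2.1 b,
    Set.ncard_univ, h₁.natCard_eq, Nat.add_comm]

theorem IsEdgeRegular.ncard_commonNeighbors_joinGraph_inl_inl
    (h₁ : G₁.IsEdgeRegular n₁ k₁ l₁) (h₂ : G₂.IsEdgeRegular n₂ k₂ l₂)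
    {a b : V₁} (hab : G₁.Adj a b) :
    ((G₁.joinGraph G₂).commonNeighbors (Sum.inl a) (Sum.inl b)).ncard = l₁ + n₂ := by
  rw [commonNeighbors_joinGraph_inl_inl, Set.ncard_image_inl_union_image_inr, h₁.2.2 a b hab,
    Set.ncard_univ, h₂.natCard_eq]

theorem IsEdgeRegular.ncard_commonNeighbors_joinGraph_inr_inr
    (h₁ : G₁.IsEdgeRegular n₁ k₁ l₁) (h₂ : G₂.IsEdgeRegular n₂ k₂ l₂)
    {a b : V₂} (hab : G₂.Adj a b) :
    ((G₁.joinGraph G₂).commonNeighbors (Sum.inr a) (Sum.inr b)).ncard = l₂ + n₁ := by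
  rw [commonNeighbors_joinGraph_inr_inr, Set.ncard_image_inl_union_image_inr, h₂.2.2 a b hab,
    Set.ncard_univ, h₁.natCard_eq, Nat.add_comm]

theorem IsEdgeRegular.ncard_commonNeighbors_joinGraph_inl_inr
    (h₁ : G₁.IsEdgeRegular n₁ k₁ l₁) (h₂ : G₂.IsEdgeRegular n₂ k₂ l₂) (a : V₁) (b : V₂) :
    ((G₁.joinGraph G₂).commonNeighbors (Sum.inl a) (Sum.inr b)).ncard = k₁ + k₂ := by
  rw [commonNeighbors_joinGraph_inl_inr, Set.ncard_image_inl_union_image_inr, h₁.2.1 a,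
    h₂.2.1 b]

theorem IsEdgeRegular.joinGraph
    (h₁ : G₁.IsEdgeRegular n₁ k₁ l₁) (h₂ : G₂.IsEdgeRegular n₂ k₂ l₂)
    (hpar : k₁ + n₂ = k₂ + n₁ ∧ l₁ + n₂ = l₂ + n₁ ∧ l₂ + n₁ = k₁ + k₂) :
    (G₁.joinGraph G₂).IsEdgeRegular (n₁ + n₂) (k₁ + n₂) (k₁ + k₂) := by
  obtain ⟨hk, hl, hl₂⟩ := hpar
  refine ⟨by rw [Fintype.card_sum, h₁.1, h₂.1], ?_, ?_⟩
  · rintro (a | b)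
    · exact h₁.ncard_neighborSet_joinGraph_inl h₂ a
    · rw [h₁.ncard_neighborSet_joinGraph_inr h₂ b, hk]
  · rintro (a | a) (b | b) hab
    · rw [h₁.ncard_commonNeighbors_joinGraph_inl_inl h₂ hab, hl, hl₂]
    · exact h₁.ncard_commonNeighbors_joinGraph_inl_inr h₂ a b
    · rw [commonNeighbors_symm]
      exact h₁.ncard_commonNeighbors_joinGraph_inl_inr h₂ b a
    · rw [h₁.ncard_commonNeighbors_joinGraph_inr_inr h₂ hab, hl₂]

theorem IsEdgeRegular.params_eq_of_joinGraph
    (h₁ : G₁.IsEdgeRegular n₁ k₁ l₁) (h₂ : G₂.IsEdgeRegular n₂ k₂ l₂) {n k l : ℕ}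
    (h : (G₁.joinGraph G₂).IsEdgeRegular n k l)
    (he₁ : ∃ a b : V₁, G₁.Adj a b) (he₂ : ∃ a b : V₂, G₂.Adj a b) :
    k₁ + n₂ = k₂ + n₁ ∧ l₁ + n₂ = l₂ + n₁ ∧ l₂ + n₁ = k₁ + k₂ := by
  obtain ⟨a₁, b₁, hab₁⟩ := he₁
  obtain ⟨a₂, b₂, hab₂⟩ := he₂
  have hk₁ := (h.2.1 (Sum.inl a₁)).symm.trans (h₁.ncard_neighborSet_joinGraph_inl h₂ a₁)
  have hk₂ := (h.2.1 (Sum.inr a₂)).symm.trans (h₁.ncard_neighborSet_joinGraph_inr h₂ a₂)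
  have hl₁ := (h.2.2 (Sum.inl a₁) (Sum.inl b₁) hab₁).symm.trans
    (h₁.ncard_commonNeighbors_joinGraph_inl_inl h₂ hab₁)
  have hl₂ := (h.2.2 (Sum.inr a₂) (Sum.inr b₂) hab₂).symm.trans
    (h₁.ncard_commonNeighbors_joinGraph_inr_inr h₂ hab₂)
  have hl₁₂ := (h.2.2 (Sum.inl a₁) (Sum.inr a₂) trivial).symm.trans
    (h₁.ncard_commonNeighbors_joinGraph_inl_inr h₂ a₁ a₂)
  omega

end EdgeRegular

end SimpleGraph

theorem stmt_7_general {V₁ V₂ : Type*} [Fintype V₁] [Fintype V₂]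
    (G₁ : SimpleGraph V₁) (G₂ : SimpleGraph V₂) (n₁ k₁ l₁ n₂ k₂ l₂ : ℕ)
    (h₁ : G₁.IsEdgeRegular n₁ k₁ l₁) (h₂ : G₂.IsEdgeRegular n₂ k₂ l₂)
    (he₁ : ∃ a b : V₁, G₁.Adj a b) (he₂ : ∃ a b : V₂, G₂.Adj a b) :
    ((∃ k l : ℕ, (G₁.joinGraph G₂).IsEdgeRegular (n₁ + n₂) k l) ↔
        (k₁ + n₂ = k₂ + n₁ ∧ l₁ + n₂ = l₂ + n₁ ∧ l₂ + n₁ = k₁ + k₂)) ∧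
      ((k₁ + n₂ = k₂ + n₁ ∧ l₁ + n₂ = l₂ + n₁ ∧ l₂ + n₁ = k₁ + k₂) →
        (G₁.joinGraph G₂).IsEdgeRegular (n₁ + n₂) (k₁ + n₂) (k₁ + k₂)) :=
  ⟨⟨fun ⟨_, _, h⟩ => h₁.params_eq_of_joinGraph h₂ h he₁ he₂,
    fun hpar => ⟨_, _, h₁.joinGraph h₂ hpar⟩⟩, h₁.joinGraph h₂⟩

/-- the join of two edge-regular graphs (each with at least one edge, and at least
one vertex) is edge-regular with parameters `(n₁ + n₂, k, λ)` for some `k, λ` iff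
`k₁ + n₂ = k₂ + n₁` and `λ₁ + n₂ = λ₂ + n₁ = k₁ + k₂`, in which case `k = k₁ + n₂` and
`λ = k₁ + k₂`. -/
theorem stmt_7 {V₁ V₂ : Type*} [Fintype V₁] [Fintype V₂]
    (G₁ : SimpleGraph V₁) (G₂ : SimpleGraph V₂) (n₁ k₁ l₁ n₂ k₂ l₂ : ℕ)
    (h₁ : G₁.IsEdgeRegular n₁ k₁ l₁) (h₂ : G₂.IsEdgeRegular n₂ k₂ l₂)
    (he₁ : ∃ a b : V₁, G₁.Adj a b) (he₂ : ∃ a b : V₂, G₂.Adj a b)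
    (hn₁ : 1 ≤ n₁) (hn₂ : 1 ≤ n₂) :
    ((∃ k l : ℕ, (G₁.joinGraph G₂).IsEdgeRegular (n₁ + n₂) k l) ↔
        (k₁ + n₂ = k₂ + n₁ ∧ l₁ + n₂ = l₂ + n₁ ∧ l₂ + n₁ = k₁ + k₂)) ∧
      ((k₁ + n₂ = k₂ + n₁ ∧ l₁ + n₂ = l₂ + n₁ ∧ l₂ + n₁ = k₁ + k₂) →
        (G₁.joinGraph G₂).IsEdgeRegular (n₁ + n₂) (k₁ + n₂) (k₁ + k₂)) :=
  stmt_7_general G₁ G₂ n₁ k₁ l₁ n₂ k₂ l₂ h₁ h₂ he₁ he₂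
end

section
/- Let G be a connected edge-regular graph with parameters (n, k, λ). Then the line graph L(G) is edge-regular (for some parameters) if and only if G is triangle-free or G is a complete graph. -/
open SimpleGraph

section Aux
set_option linter.unusedSectionVars false

variable {V : Type*} [Fintype V] [DecidableEq V] (G : SimpleGraph V) [DecidableRel G.Adj]

lemma lg_nbhd (u v : V) (h : G.Adj u v) :
    Subtype.val '' (G.lineGraph.neighborSet ⟨s(u,v), h⟩) =
      (G.incidenceSet u ∪ G.incidenceSet v) \ {s(u,v)} := by
  ext g
  simp only [Set.mem_image, mem_neighborSet, lineGraph, Set.mem_diff, Set.mem_union,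
    Set.mem_singleton_iff, SimpleGraph.incidenceSet, Set.mem_setOf_eq]
  constructor
  · rintro ⟨⟨g', hg'⟩, ⟨hne, x, hx⟩, rfl⟩
    simp only [Set.mem_inter_iff, SetLike.mem_coe] at hx
    have hx1 := hx.1
    rw [Sym2.mem_iff] at hx1
    refine ⟨?_, by simpa [Subtype.ext_iff, eq_comm] using hne⟩
    rcases hx1 with rfl | rfl
    · exact Or.inl ⟨hg', hx.2⟩
    · exact Or.inr ⟨hg', hx.2⟩
  · rintro ⟨hmem, hne⟩
    rcases hmem with ⟨hg, hu⟩ | ⟨hg, hv⟩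
    · exact ⟨⟨g, hg⟩, ⟨by simpa [Subtype.ext_iff, eq_comm] using hne, u, by simp [hu]⟩, rfl⟩
    · exact ⟨⟨g, hg⟩, ⟨by simpa [Subtype.ext_iff, eq_comm] using hne, v, by simp [hv]⟩, rfl⟩

lemma ncard_incid (v : V) : (G.incidenceSet v).ncard = (G.neighborSet v).ncard := by
  rw [← Nat.card_coe_set_eq, ← Nat.card_coe_set_eq]
  exact Nat.card_congr (G.incidenceSetEquivNeighborSet v)

lemma lg_degree (u v : V) (h : G.Adj u v) {k : ℕ}
    (hk : ∀ x, (G.neighborSet x).ncard = k) :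
    (G.lineGraph.neighborSet ⟨s(u,v), h⟩).ncard = 2*(k-1) := by
  have himg := congrArg Set.ncard (lg_nbhd G u v h)
  rw [Set.ncard_image_of_injective _ Subtype.val_injective] at himg
  rw [himg, Set.union_diff_distrib]
  have hdisj : Disjoint (G.incidenceSet u \ {s(u,v)}) (G.incidenceSet v \ {s(u,v)}) := by
    rw [Set.disjoint_iff_inter_eq_empty]
    have heq : G.incidenceSet u \ {s(u,v)} ∩ (G.incidenceSet v \ {s(u,v)})
        = (G.incidenceSet u ∩ G.incidenceSet v) \ {s(u,v)} := by
      ext x; simp only [Set.mem_inter_iff, Set.mem_diff]; tauto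
    rw [heq, G.incidenceSet_inter_incidenceSet_of_adj h]
    simp
  rw [Set.ncard_union_eq hdisj (Set.toFinite _) (Set.toFinite _),
    Set.ncard_diff_singleton_of_mem (G.mk'_mem_incidenceSet_left_iff.2 h),
    Set.ncard_diff_singleton_of_mem (G.mk'_mem_incidenceSet_right_iff.2 h),
    ncard_incid, ncard_incid, hk, hk]
  omega

lemma sym2_ne_of_ne {u v w : V} (huv : u ≠ v) (huw : u ≠ w) (hvw : v ≠ w) :
    s(u,v) ≠ s(u,w) := by
  rw [Ne, Sym2.eq_iff]
  push_neg
  exact ⟨fun _ => hvw, fun h _ => huw h⟩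

lemma sym2_ne_of_not_mem {u : V} {e : Sym2 V} (h : u ∉ e) (v : V) : e ≠ s(u,v) := by
  rintro rfl; exact h (Sym2.mem_mk_left u v)

lemma lg_common (u v w : V) (huv : G.Adj u v) (huw : G.Adj u w) (hvw : v ≠ w) :
    Subtype.val '' (G.lineGraph.commonNeighbors ⟨s(u,v), huv⟩ ⟨s(u,w), huw⟩) =
      (G.incidenceSet u \ {s(u,v), s(u,w)}) ∪ (G.edgeSet ∩ {s(v,w)}) := by
  have huv' := huv.ne
  have huw' := huw.ne
  ext g
  simp only [Set.mem_image, commonNeighbors, Set.mem_inter_iff, mem_neighborSet, lineGraph,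
    Set.mem_union, Set.mem_diff, Set.mem_singleton_iff, Set.mem_insert_iff, not_or]
  constructor
  · rintro ⟨⟨g', hg'⟩, ⟨⟨hne1, x, hx⟩, ⟨hne2, y, hy⟩⟩, rfl⟩
    simp only [Set.mem_inter_iff, SetLike.mem_coe] at hx hy
    have hne1' : g' ≠ s(u,v) := by simpa [Subtype.ext_iff, eq_comm] using hne1
    have hne2' : g' ≠ s(u,w) := by simpa [Subtype.ext_iff, eq_comm] using hne2
    have hx1 := hx.1; have hy1 := hy.1
    rw [Sym2.mem_iff] at hx1 hy1
    by_cases hu : u ∈ g'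
    · exact Or.inl ⟨⟨hg', hu⟩, hne1', hne2'⟩
    · have hv : v ∈ g' := by
        rcases hx1 with rfl | rfl
        exacts [absurd hx.2 hu, hx.2]
      have hw : w ∈ g' := by
        rcases hy1 with rfl | rfl
        exacts [absurd hy.2 hu, hy.2]
      exact Or.inr ⟨hg', (Sym2.mem_and_mem_iff hvw).1 ⟨hv, hw⟩⟩
  · rintro (⟨⟨hg, hu⟩, hne1, hne2⟩ | ⟨hg, rfl⟩)
    · exact ⟨⟨g, hg⟩, ⟨⟨by simpa [Subtype.ext_iff, eq_comm] using hne1, u, by simp [hu]⟩,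
        ⟨by simpa [Subtype.ext_iff, eq_comm] using hne2, u, by simp [hu]⟩⟩, rfl⟩
    · have hu : u ∉ s(v,w) := by rw [Sym2.mem_iff]; push_neg; exact ⟨huv', huw'⟩
      have h1 : s(v,w) ≠ s(u,v) := sym2_ne_of_not_mem hu v
      have h2 : s(v,w) ≠ s(u,w) := sym2_ne_of_not_mem hu w
      refine ⟨⟨s(v,w), hg⟩, ⟨⟨by simpa [Subtype.ext_iff, eq_comm] using h1, v, by simp⟩,
        ⟨by simpa [Subtype.ext_iff, eq_comm] using h2, w, by simp⟩⟩, rfl⟩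

lemma lg_common_card (u v w : V) (huv : G.Adj u v) (huw : G.Adj u w) (hvw : v ≠ w) {k : ℕ}
    (hk : ∀ x, (G.neighborSet x).ncard = k) :
    (G.lineGraph.commonNeighbors ⟨s(u,v), huv⟩ ⟨s(u,w), huw⟩).ncard =
      (k - 2) + (if G.Adj v w then 1 else 0) := by
  have himg := congrArg Set.ncard (lg_common G u v w huv huw hvw)
  rw [Set.ncard_image_of_injective _ Subtype.val_injective] at himg
  rw [himg]
  have hdisj : Disjoint (G.incidenceSet u \ {s(u,v), s(u,w)}) (G.edgeSet ∩ {s(v,w)}) := by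
    rw [Set.disjoint_left]
    rintro a ⟨⟨_, ha⟩, _⟩ ⟨_, rfl⟩
    rw [Sym2.mem_iff] at ha
    rcases ha with rfl | rfl
    · exact huv.ne rfl
    · exact huw.ne rfl
  rw [Set.ncard_union_eq hdisj (Set.toFinite _) (Set.toFinite _)]
  have hsub : ({s(u,v), s(u,w)} : Set (Sym2 V)) ⊆ G.incidenceSet u := by
    rintro a (rfl | rfl)
    · exact G.mk'_mem_incidenceSet_left_iff.2 huv
    · exact G.mk'_mem_incidenceSet_left_iff.2 huw
  have hpair : ({s(u,v), s(u,w)} : Set (Sym2 V)).ncard = 2 :=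
    Set.ncard_pair (sym2_ne_of_ne huv.ne huw.ne hvw)
  rw [Set.ncard_diff hsub (Set.toFinite _), hpair, ncard_incid, hk]
  congr 1
  by_cases hvw' : G.Adj v w
  · rw [if_pos hvw', Set.inter_eq_right.2 (by rintro a rfl; exact hvw'), Set.ncard_singleton]
  · rw [if_neg hvw']
    have h0 : G.edgeSet ∩ {s(v,w)} = ∅ := by
      rw [Set.eq_empty_iff_forall_notMem]; rintro a ⟨ha, rfl⟩; exact hvw' ha
    rw [h0, Set.ncard_empty]

lemma lg_adj_decomp {E F : G.edgeSet} (h : G.lineGraph.Adj E F) :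
    ∃ (u v w : V) (huv : G.Adj u v) (huw : G.Adj u w), v ≠ w ∧
      E = ⟨s(u,v), huv⟩ ∧ F = ⟨s(u,w), huw⟩ := by
  obtain ⟨hne, x, hx1, hx2⟩ := lineGraph_adj_iff_exists.1 h
  obtain ⟨v, hv⟩ := Sym2.mem_iff_exists.1 hx1
  obtain ⟨w, hw⟩ := Sym2.mem_iff_exists.1 hx2
  have huv : G.Adj x v := (G.mem_edgeSet).1 (hv ▸ E.2)
  have huw : G.Adj x w := (G.mem_edgeSet).1 (hw ▸ F.2)
  refine ⟨x, v, w, huv, huw, ?_, Subtype.ext hv, Subtype.ext hw⟩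
  rintro rfl
  exact hne (Subtype.ext (hv.trans hw.symm))

lemma two_le_k {a b c : V} (hab : G.Adj a b) (hac : G.Adj a c) (hbc : b ≠ c) {k : ℕ}
    (hk : ∀ x, (G.neighborSet x).ncard = k) : 2 ≤ k := by
  have h := (Set.one_lt_ncard (s := G.neighborSet a) (Set.toFinite _)).2 ⟨b, hab, c, hac, hbc⟩
  rw [hk] at h
  omega

lemma all_nbhd_clique_top (hcl : ∀ a b c : V, G.Adj a b → G.Adj a c → b ≠ c → G.Adj b c)
    (hconn : G.Connected) : G = ⊤ := by
  have key : ∀ {a b : V} (_ : G.Walk a b), a = b ∨ G.Adj a b := by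
    intro a b p
    induction p with
    | nil => exact Or.inl rfl
    | @cons u x w hadj p ih =>
      rcases ih with rfl | hxw
      · exact Or.inr hadj
      · by_cases huw : u = w
        · exact Or.inl huw
        · exact Or.inr (hcl x u w hadj.symm hxw huw)
  rw [eq_top_iff]
  intro x y hxy
  rcases key ((hconn.preconnected x y).some) with rfl | h
  · exact absurd rfl hxy.ne
  · exact h

end Aux

/-- for a connected edge-regular graph `G`, the line graph `L(G)` is edge-regular
(for some parameters) iff `G` is triangle-free or `G` is complete. -/
theorem stmt_9 {V : Type*} [Fintype V] [DecidableEq V] (G : SimpleGraph V) [DecidableRel G.Adj]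
    (n k l : ℕ) (hG : G.IsEdgeRegular n k l) (hconn : G.Connected) :
    (∃ m d e : ℕ, G.lineGraph.IsEdgeRegular m d e) ↔ (G.CliqueFree 3 ∨ G = ⊤) := by
  obtain ⟨hn, hk, hl⟩ := hG
  have hdeg : ∀ E : G.edgeSet, (G.lineGraph.neighborSet E).ncard = 2*(k-1) := by
    rintro ⟨ev, he⟩
    revert he
    refine Sym2.ind (fun u v => ?_) ev
    intro he
    exact lg_degree G u v (G.mem_edgeSet.1 he) hk
  constructor
  · rintro ⟨m, d, e, -, -, hcom⟩
    by_contra hcon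
    push_neg at hcon
    obtain ⟨hnotfree, hnottop⟩ := hcon
    have hex : ¬ ∀ a b c : V, G.Adj a b → G.Adj a c → b ≠ c → G.Adj b c :=
      fun h => hnottop (all_nbhd_clique_top G h hconn)
    push_neg at hex
    obtain ⟨a, b, c, hab, hac, hbc, hnadj⟩ := hex
    rw [CliqueFree] at hnotfree
    push_neg at hnotfree
    obtain ⟨t, ht⟩ := hnotfree
    obtain ⟨x, y, z, hxy, hxz, hyz, -⟩ := is3Clique_iff.1 ht
    have hyz' : y ≠ z := hyz.ne
    have hadj1 : G.lineGraph.Adj ⟨s(x,y), hxy⟩ ⟨s(x,z), hxz⟩ := by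
      refine lineGraph_adj_iff_exists.2 ⟨?_, x, by simp, by simp⟩
      simp only [Ne, Subtype.ext_iff]
      exact sym2_ne_of_ne hxy.ne hxz.ne hyz'
    have hadj2 : G.lineGraph.Adj ⟨s(a,b), hab⟩ ⟨s(a,c), hac⟩ := by
      refine lineGraph_adj_iff_exists.2 ⟨?_, a, by simp, by simp⟩
      simp only [Ne, Subtype.ext_iff]
      exact sym2_ne_of_ne hab.ne hac.ne hbc
    have h1 := hcom _ _ hadj1
    rw [lg_common_card G x y z hxy hxz hyz' hk, if_pos hyz] at h1
    have h2 := hcom _ _ hadj2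
    rw [lg_common_card G a b c hab hac hbc hk, if_neg hnadj] at h2
    have hk2 : 2 ≤ k := two_le_k G hab hac hbc hk
    omega
  · rintro (hfree | htop)
    · refine ⟨_, 2*(k-1), k-2, rfl, hdeg, ?_⟩
      intro E F hadj
      obtain ⟨u, v, w, huv, huw, hvw, rfl, rfl⟩ := lg_adj_decomp G hadj
      have hnadj : ¬ G.Adj v w :=
        fun h => hfree {u,v,w} (is3Clique_triple_iff.2 ⟨huv, huw, h⟩)
      rw [lg_common_card G u v w huv huw hvw hk, if_neg hnadj]
      omega
    · refine ⟨_, 2*(k-1), (k-2)+1, rfl, hdeg, ?_⟩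
      intro E F hadj
      obtain ⟨u, v, w, huv, huw, hvw, rfl, rfl⟩ := lg_adj_decomp G hadj
      have h' : G.Adj v w := by rw [htop]; exact hvw
      rw [lg_common_card G u v w huv huw hvw hk, if_pos h']
end

section
/- There is no pseudo strongly regular graph G containing two non-incident (vertex-disjoint) edges such that the line graph L(G) is pseudo strongly regular with parameter μ = 3. -/
/-!
If `μ(L(G)) = 3`, then for any two vertex-disjoint edges `ab`, `cd` of `G` exactly three of the
four pairs `ac, ad, bc, bd` are edges, so `a, b, c, d` span a diamond: `K₄` minus an edge `vv'`,
with diagonal `uw`. A third neighbour `x` of `v` is impossible: counting against `uv'` and `wv'`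
makes `x` adjacent to `u` and to `w`, and then all four pairs between `vx` and `uw` are edges.
So `v` has degree `2` while `u` has degree at least `3`, contradicting regularity.
-/

open SimpleGraph

theorem exactly_one_not_of_ite_sum_eq_three {p q r s : Prop} [Decidable p] [Decidable q]
    [Decidable r] [Decidable s]
    (h : (if p then 1 else 0) + (if q then 1 else 0) + (if r then 1 else 0) +
      (if s then 1 else 0) = 3) :
    (¬p ∧ q ∧ r ∧ s) ∨ (p ∧ ¬q ∧ r ∧ s) ∨ (p ∧ q ∧ ¬r ∧ s) ∨ (p ∧ q ∧ r ∧ ¬s) := by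
  split_ifs at h <;> simp_all

namespace SimpleGraph

variable {V : Type*} {G : SimpleGraph V} {a b c d : V}

theorem lineGraph_not_adj_of_disjoint (hab : G.Adj a b) (hcd : G.Adj c d)
    (hac : a ≠ c) (had : a ≠ d) (hbc : b ≠ c) (hbd : b ≠ d) :
    ¬G.lineGraph.Adj ⟨s(a, b), hab⟩ ⟨s(c, d), hcd⟩ := by
  simp only [lineGraph_adj_iff_exists, Sym2.mem_iff]
  grind

theorem lineGraph_commonNeighbors_eq_preimage (hab : G.Adj a b) (hcd : G.Adj c d)
    (hac : a ≠ c) (had : a ≠ d) (hbc : b ≠ c) (hbd : b ≠ d) :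
    G.lineGraph.commonNeighbors ⟨s(a, b), hab⟩ ⟨s(c, d), hcd⟩ =
      Subtype.val ⁻¹' {s(a, c), s(a, d), s(b, c), s(b, d)} := by
  ext ⟨e, he⟩
  induction e using Sym2.ind with
  | _ p q =>
  simp only [commonNeighbors, Set.mem_inter_iff, mem_neighborSet, lineGraph_adj_iff_exists,
    Set.mem_preimage, Set.mem_insert_iff, Set.mem_singleton_iff, Sym2.mem_iff, ne_eq,
    Sym2.eq_iff, Subtype.ext_iff, or_and_right, exists_or, exists_eq_left]
  grind

def crossAdjCount (G : SimpleGraph V) [DecidableRel G.Adj] (a b c d : V) : ℕ :=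
  (if G.Adj a c then 1 else 0) + (if G.Adj a d then 1 else 0) +
    (if G.Adj b c then 1 else 0) + (if G.Adj b d then 1 else 0)

theorem ncard_lineGraph_commonNeighbors [DecidableRel G.Adj] (hab : G.Adj a b)
    (hcd : G.Adj c d) (hac : a ≠ c) (had : a ≠ d) (hbc : b ≠ c) (hbd : b ≠ d) :
    (G.lineGraph.commonNeighbors ⟨s(a, b), hab⟩ ⟨s(c, d), hcd⟩).ncard =
      G.crossAdjCount a b c d := by
  classical
  rw [lineGraph_commonNeighbors_eq_preimage hab hcd hac had hbc hbd,
    ← Set.ncard_image_of_injective _ Subtype.val_injective, Subtype.image_preimage_coe]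
  have hfilter : G.edgeSet ∩ {s(a, c), s(a, d), s(b, c), s(b, d)} =
      ({s(a, c), s(a, d), s(b, c), s(b, d)} : Finset (Sym2 V)).filter (· ∈ G.edgeSet) := by
    ext; simp [and_comm]
  rw [hfilter, Set.ncard_coe_finset, Finset.card_filter, Finset.sum_insert, Finset.sum_insert,
    Finset.sum_insert, Finset.sum_singleton]
  · simp only [crossAdjCount, mem_edgeSet, add_assoc]
  all_goals simp [hab.ne, hcd.ne, hac, had, hbd]

variable [DecidableRel G.Adj]

theorem crossAdjCount_eq_three
    (hL : ∀ e₁ e₂ : G.edgeSet, e₁ ≠ e₂ → ¬G.lineGraph.Adj e₁ e₂ →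
      (G.lineGraph.commonNeighbors e₁ e₂).ncard = 3)
    (hab : G.Adj a b) (hcd : G.Adj c d) (hac : a ≠ c) (had : a ≠ d) (hbc : b ≠ c)
    (hbd : b ≠ d) :
    G.crossAdjCount a b c d = 3 := by
  have hne : (⟨s(a, b), hab⟩ : G.edgeSet) ≠ ⟨s(c, d), hcd⟩ := by
    simp [Subtype.ext_iff, hac, had]
  rw [← ncard_lineGraph_commonNeighbors hab hcd hac had hbc hbd]
  exact hL _ _ hne (lineGraph_not_adj_of_disjoint hab hcd hac had hbc hbd)

theorem exists_diamond_of_lineGraph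
    (hL : ∀ e₁ e₂ : G.edgeSet, e₁ ≠ e₂ → ¬G.lineGraph.Adj e₁ e₂ →
      (G.lineGraph.commonNeighbors e₁ e₂).ncard = 3)
    (hab : G.Adj a b) (hcd : G.Adj c d) (hac : a ≠ c) (had : a ≠ d) (hbc : b ≠ c)
    (hbd : b ≠ d) :
    ∃ u w v v', G.Adj u w ∧ G.Adj u v ∧ G.Adj u v' ∧ G.Adj w v ∧ G.Adj w v' ∧ v ≠ v' ∧
      ¬G.Adj v v' := by
  rcases exactly_one_not_of_ite_sum_eq_three (crossAdjCount_eq_three hL hab hcd hac had hbc hbd)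
    with ⟨h₁, h₂, h₃, h₄⟩ | ⟨h₁, h₂, h₃, h₄⟩ | ⟨h₁, h₂, h₃, h₄⟩ | ⟨h₁, h₂, h₃, h₄⟩
  · exact ⟨b, d, a, c, h₄, hab.symm, h₃, h₂.symm, hcd.symm, hac, h₁⟩
  · exact ⟨b, c, a, d, h₃, hab.symm, h₄, h₁.symm, hcd, had, h₂⟩
  · exact ⟨a, d, b, c, h₂, hab, h₁, h₄.symm, hcd.symm, hbc, h₃⟩
  · exact ⟨a, c, b, d, h₁, hab, h₂, h₃.symm, hcd, hbd, h₄⟩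

theorem neighborSet_subset_of_diamond {u w v v' : V}
    (hL : ∀ e₁ e₂ : G.edgeSet, e₁ ≠ e₂ → ¬G.lineGraph.Adj e₁ e₂ →
      (G.lineGraph.commonNeighbors e₁ e₂).ncard = 3)
    (huw : G.Adj u w) (huv : G.Adj u v) (huv' : G.Adj u v') (hwv : G.Adj w v)
    (hwv' : G.Adj w v') (hvv' : v ≠ v') (hnadj : ¬G.Adj v v') :
    G.neighborSet v ⊆ {u, w} := by
  intro x hvx
  by_contra hx
  simp only [Set.mem_insert_iff, Set.mem_singleton_iff, not_or] at hx
  have hxv' : x ≠ v' := by rintro rfl; exact hnadj hvx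
  have h₁ := crossAdjCount_eq_three hL hvx huw huv.ne' hwv.ne' hx.1 hx.2
  have h₂ := crossAdjCount_eq_three hL hvx huv' huv.ne' hvv' hx.1 hxv'
  have h₃ := crossAdjCount_eq_three hL hvx hwv' hwv.ne' hvv' hx.2 hxv'
  simp only [crossAdjCount, huv.symm, hwv.symm, hnadj, if_true, if_false] at h₁ h₂ h₃
  split_ifs at h₁ h₂ h₃ <;> omega

end SimpleGraph

theorem stmt_11_general {V : Type*} [Fintype V] (G : SimpleGraph V) [DecidableRel G.Adj]
    (n k μ : ℕ) (hG : G.IsPseudoSRG n k μ)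
    (hne : ∃ a b c d : V, G.Adj a b ∧ G.Adj c d ∧ a ≠ c ∧ a ≠ d ∧ b ≠ c ∧ b ≠ d) :
    ∀ m d : ℕ, ¬G.lineGraph.IsPseudoSRG m d 3 := by
  obtain ⟨-, hdeg, -⟩ := hG
  rintro - - ⟨-, -, hL⟩
  obtain ⟨a, b, c, d, hab, hcd, hac, had, hbc, hbd⟩ := hne
  obtain ⟨u, w, v, v', huw, huv, huv', hwv, hwv', hvv', hnadj⟩ :=
    exists_diamond_of_lineGraph hL hab hcd hac had hbc hbd
  have hu : 3 ≤ (G.neighborSet u).ncard :=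
    calc 3 = ({w, v, v'} : Set V).ncard :=
          (Set.ncard_eq_three.mpr ⟨w, v, v', hwv.ne, hwv'.ne, hvv', rfl⟩).symm
      _ ≤ _ := Set.ncard_le_ncard (by simp [Set.insert_subset_iff, huw, huv, huv'])
  have hv : (G.neighborSet v).ncard ≤ 2 :=
    calc _ ≤ ({u, w} : Set V).ncard :=
          Set.ncard_le_ncard (neighborSet_subset_of_diamond hL huw huv huv' hwv hwv' hvv' hnadj)
      _ = 2 := Set.ncard_pair huw.ne
  rw [hdeg] at hu hv
  omega

/-- there is no pseudo strongly regular graph `G` with two non-incident edges whose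
line graph is pseudo strongly regular with parameter `μ = 3`. -/
theorem stmt_11 {V : Type*} [Fintype V] [DecidableEq V] (G : SimpleGraph V) [DecidableRel G.Adj]
    (n k μ : ℕ) (hG : G.IsPseudoSRG n k μ)
    (hne : ∃ a b c d : V, G.Adj a b ∧ G.Adj c d ∧ a ≠ c ∧ a ≠ d ∧ b ≠ c ∧ b ≠ d) :
    ∀ m d : ℕ, ¬G.lineGraph.IsPseudoSRG m d 3 :=
  stmt_11_general G n k μ hG hne
end

section
/- Let G be a pseudo strongly regular graph on n vertices containing two non-incident (vertex-disjoint) edges. Then the line graph L(G) is pseudo strongly regular with parameter μ = 4 if and only if G is the complete graph K_n with n ≥ 4. -/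
open SimpleGraph

lemma pre_ncard {V : Type*} (G : SimpleGraph V) (S : Set (Sym2 V)) :
    (Subtype.val ⁻¹' S : Set G.edgeSet).ncard = (S ∩ G.edgeSet).ncard := by
  rw [← Set.ncard_image_of_injective _ Subtype.val_injective,
    Set.image_preimage_eq_inter_range, Subtype.range_val]

lemma cross_eq {V : Type*} (G : SimpleGraph V) {a b c d : V} (e₁ e₂ : G.edgeSet)
    (he₁ : (e₁ : Sym2 V) = s(a, b)) (he₂ : (e₂ : Sym2 V) = s(c, d))
    (hac : a ≠ c) (had : a ≠ d) (hbc : b ≠ c) (hbd : b ≠ d) :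
    G.lineGraph.commonNeighbors e₁ e₂ =
      Subtype.val ⁻¹' ({s(a, c), s(a, d), s(b, c), s(b, d)} : Set (Sym2 V)) := by
  have hab : G.Adj a b := G.mem_edgeSet.mp (he₁ ▸ e₁.2)
  have hcd : G.Adj c d := G.mem_edgeSet.mp (he₂ ▸ e₂.2)
  have hab' := hab.ne
  have hcd' := hcd.ne
  ext f
  obtain ⟨f, hf⟩ := f
  induction f using Sym2.ind with
  | _ x y =>
  have hxy : x ≠ y := (G.mem_edgeSet.mp hf).ne
  simp only [commonNeighbors, Set.mem_inter_iff, mem_neighborSet, lineGraph_adj_iff_exists,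
    ne_eq, Subtype.ext_iff, he₁, he₂, Sym2.mem_iff, Sym2.eq_iff, Set.mem_preimage,
    Set.mem_insert_iff, Set.mem_singleton_iff]
  constructor
  · rintro ⟨⟨h1, v, hv1, hv2⟩, ⟨h2, w, hw1, hw2⟩⟩
    aesop
  · intro h
    aesop

lemma ncard3_le {α : Type*} (q r s : α) : ({q, r, s} : Set α).ncard ≤ 3 := by
  calc ({q, r, s} : Set α).ncard ≤ ({r, s} : Set α).ncard + 1 := Set.ncard_insert_le _ _
    _ ≤ (({s} : Set α).ncard + 1) + 1 := by gcongr; exact Set.ncard_insert_le _ _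
    _ ≤ 3 := by simp

lemma four_mem {α : Type*} {p q r s : α} {T : Set α}
    (h : ({p, q, r, s} ∩ T : Set α).ncard = 4) : p ∈ T ∧ q ∈ T ∧ r ∈ T ∧ s ∈ T := by
  have fin3 : ∀ x y z : α, ({x, y, z} : Set α).Finite := by
    intro x y z; exact (Set.finite_singleton z).insert y |>.insert x
  have key : ∀ (x : α) (R : Set α), x ∉ T → R.ncard ≤ 3 → R.Finite →
      ({p, q, r, s} ∩ T : Set α) ⊆ R → False := by
    intro x R hx hR hRf hsub
    have := Set.ncard_le_ncard hsub hRf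
    omega
  refine ⟨?_, ?_, ?_, ?_⟩
  · by_contra hp
    exact key p {q, r, s} hp (ncard3_le _ _ _) (fin3 _ _ _) (by
      rintro z ⟨hz1, hz2⟩
      rcases hz1 with rfl | rfl | rfl | rfl <;> first | (exact absurd hz2 hp) | simp)
  · by_contra hq
    exact key q {p, r, s} hq (ncard3_le _ _ _) (fin3 _ _ _) (by
      rintro z ⟨hz1, hz2⟩
      rcases hz1 with rfl | rfl | rfl | rfl <;> first | (exact absurd hz2 hq) | simp)
  · by_contra hr
    exact key r {p, q, s} hr (ncard3_le _ _ _) (fin3 _ _ _) (by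
      rintro z ⟨hz1, hz2⟩
      rcases hz1 with rfl | rfl | rfl | rfl <;> first | (exact absurd hz2 hr) | simp)
  · by_contra hs
    exact key s {p, q, r} hs (ncard3_le _ _ _) (fin3 _ _ _) (by
      rintro z ⟨hz1, hz2⟩
      rcases hz1 with rfl | rfl | rfl | rfl <;> first | (exact absurd hz2 hs) | simp)

lemma ncard4 {α : Type*} {p q r s : α} (hpq : p ≠ q) (hpr : p ≠ r) (hps : p ≠ s)
    (hqr : q ≠ r) (hqs : q ≠ s) (hrs : r ≠ s) : ({p, q, r, s} : Set α).ncard = 4 := by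
  rw [Set.ncard_insert_of_notMem (by simp [hpq, hpr, hps])
      (((Set.finite_singleton s).insert r).insert q),
    Set.ncard_insert_of_notMem (by simp [hqr, hqs]) ((Set.finite_singleton s).insert r),
    Set.ncard_insert_of_notMem (by simp [hrs]), Set.ncard_singleton]

/-- If `L(G)` has all non-adjacent common-neighbour counts equal to 4, then any two
vertex-disjoint edges span a `K₄`. -/
lemma key_cross {V : Type*} [Fintype V] (G : SimpleGraph V)
    (h3 : ∀ e₁ e₂ : G.edgeSet, e₁ ≠ e₂ → ¬G.lineGraph.Adj e₁ e₂ →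
      (G.lineGraph.commonNeighbors e₁ e₂).ncard = 4)
    {a b c d : V} (hab : G.Adj a b) (hcd : G.Adj c d)
    (hac : a ≠ c) (had : a ≠ d) (hbc : b ≠ c) (hbd : b ≠ d) :
    G.Adj a c ∧ G.Adj a d ∧ G.Adj b c ∧ G.Adj b d := by
  set e₁ : G.edgeSet := ⟨s(a, b), G.mem_edgeSet.mpr hab⟩ with he₁
  set e₂ : G.edgeSet := ⟨s(c, d), G.mem_edgeSet.mpr hcd⟩ with he₂
  have hne : e₁ ≠ e₂ := by
    simp only [he₁, he₂, ne_eq, Subtype.mk.injEq, Sym2.eq_iff]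
    tauto
  have hnadj : ¬G.lineGraph.Adj e₁ e₂ := by
    rw [lineGraph_adj_iff_exists]
    rintro ⟨-, v, hv1, hv2⟩
    simp only [he₁, he₂, Sym2.mem_iff] at hv1 hv2
    rcases hv1 with rfl | rfl <;> rcases hv2 with rfl | rfl <;> tauto
  have h4 := h3 e₁ e₂ hne hnadj
  rw [cross_eq G e₁ e₂ rfl rfl hac had hbc hbd, pre_ncard] at h4
  obtain ⟨h1, h2, h3', h4'⟩ := four_mem h4
  exact ⟨G.mem_edgeSet.mp h1, G.mem_edgeSet.mp h2, G.mem_edgeSet.mp h3', G.mem_edgeSet.mp h4'⟩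

lemma top_line_degree {V : Type*} [Fintype V] [DecidableEq V]
    (e : (⊤ : SimpleGraph V).edgeSet) :
    ((⊤ : SimpleGraph V).lineGraph.neighborSet e).ncard = 2 * (Fintype.card V - 2) := by
  obtain ⟨f, hf⟩ := e
  induction f using Sym2.ind with
  | _ a b =>
  have hab : a ≠ b := ((⊤ : SimpleGraph V).mem_edgeSet.mp hf).ne
  set N : Set (Sym2 V) :=
    ((fun x => s(a, x)) '' ({a, b} : Set V)ᶜ) ∪ ((fun x => s(b, x)) '' ({a, b} : Set V)ᶜ) with hN
  have hmemN : ∀ g : Sym2 V, g ∈ N ↔ ¬g.IsDiag ∧ g ≠ s(a, b) ∧ (a ∈ g ∨ b ∈ g) := by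
    intro g
    constructor
    · rintro (⟨z, hz, rfl⟩ | ⟨z, hz, rfl⟩) <;>
      · simp only [Set.mem_compl_iff, Set.mem_insert_iff, Set.mem_singleton_iff, not_or] at hz
        refine ⟨by simp only [Sym2.isDiag_iff_proj_eq]; aesop, ?_, by simp⟩
        simp only [ne_eq, Sym2.eq_iff]
        aesop
    · rintro ⟨hdiag, hne, hg | hg⟩
      · obtain ⟨z, rfl⟩ := Sym2.mem_iff_exists.mp hg
        left
        refine ⟨z, ?_, rfl⟩
        simp only [Set.mem_compl_iff, Set.mem_insert_iff, Set.mem_singleton_iff, not_or]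
        constructor
        · rintro rfl; exact hdiag (by simp)
        · rintro rfl; exact hne rfl
      · obtain ⟨z, rfl⟩ := Sym2.mem_iff_exists.mp hg
        right
        refine ⟨z, ?_, rfl⟩
        simp only [Set.mem_compl_iff, Set.mem_insert_iff, Set.mem_singleton_iff, not_or]
        constructor
        · rintro rfl; exact hne Sym2.eq_swap
        · rintro rfl; exact hdiag (by simp)
  have hset : (⊤ : SimpleGraph V).lineGraph.neighborSet ⟨s(a, b), hf⟩ = Subtype.val ⁻¹' N := by
    ext g
    obtain ⟨g, hg⟩ := g
    have hg' : ¬g.IsDiag := by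
      revert hg
      induction g using Sym2.ind with
      | _ x y => intro hg; simp [Sym2.isDiag_iff_proj_eq]; exact ((⊤ : SimpleGraph V).mem_edgeSet.mp hg).ne
    simp only [mem_neighborSet, lineGraph_adj_iff_exists, Set.mem_preimage, hmemN, ne_eq,
      Subtype.ext_iff, Sym2.mem_iff]
    constructor
    · rintro ⟨hne, v, hv1, hv2⟩
      refine ⟨hg', fun h => hne h.symm, ?_⟩
      revert hv2
      induction g using Sym2.ind with
      | _ x y =>
        simp only [Sym2.mem_iff]
        rcases hv1 with rfl | rfl <;> tauto
    · rintro ⟨_, hne, hv⟩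
      refine ⟨fun h => hne h.symm, ?_⟩
      revert hv
      induction g using Sym2.ind with
      | _ x y =>
        simp only [Sym2.mem_iff]
        rintro (h | h) <;> [exact ⟨a, by tauto⟩; exact ⟨b, by tauto⟩]
  rw [hset, pre_ncard]
  have hNsub : N ∩ (⊤ : SimpleGraph V).edgeSet = N := by
    refine Set.inter_eq_left.mpr ?_
    intro g hg
    rw [hmemN] at hg
    revert hg
    induction g using Sym2.ind with
    | _ x y =>
      rintro ⟨hdiag, -, -⟩
      rw [SimpleGraph.mem_edgeSet, top_adj]
      simpa [Sym2.isDiag_iff_proj_eq] using hdiag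
  rw [hNsub, hN]
  have hinj : ∀ c : V, Set.InjOn (fun x => s(c, x)) (({a, b} : Set V)ᶜ) := by
    intro c x hx y hy hxy
    simp only [Sym2.eq_iff] at hxy
    rcases hxy with ⟨-, h⟩ | ⟨h1, h2⟩
    · exact h
    · exact h2.trans h1
  have hdisj : Disjoint ((fun x => s(a, x)) '' ({a, b} : Set V)ᶜ)
      ((fun x => s(b, x)) '' ({a, b} : Set V)ᶜ) := by
    rw [Set.disjoint_left]
    rintro g ⟨z, hz, rfl⟩ ⟨w, hw, hw'⟩
    simp only [Set.mem_compl_iff, Set.mem_insert_iff, Set.mem_singleton_iff, not_or] at hz hw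
    simp only [Sym2.eq_iff] at hw'
    tauto
  have hcompl : (({a, b} : Set V)ᶜ).ncard = Fintype.card V - 2 := by
    rw [Set.compl_eq_univ_diff, Set.ncard_diff (Set.subset_univ _), Set.ncard_univ,
      Set.ncard_pair hab, Nat.card_eq_fintype_card]
  rw [Set.ncard_union_eq hdisj (Set.toFinite _) (Set.toFinite _),
    Set.ncard_image_of_injOn (hinj a), Set.ncard_image_of_injOn (hinj b), hcompl]
  omega

lemma top_line_common {V : Type*} [Fintype V] [DecidableEq V]
    (e₁ e₂ : (⊤ : SimpleGraph V).edgeSet) (hne : e₁ ≠ e₂)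
    (hnadj : ¬(⊤ : SimpleGraph V).lineGraph.Adj e₁ e₂) :
    ((⊤ : SimpleGraph V).lineGraph.commonNeighbors e₁ e₂).ncard = 4 := by
  obtain ⟨f₁, hf₁⟩ := e₁
  obtain ⟨f₂, hf₂⟩ := e₂
  induction f₁ using Sym2.ind with
  | _ a b =>
  induction f₂ using Sym2.ind with
  | _ c d =>
  have hab : a ≠ b := ((⊤ : SimpleGraph V).mem_edgeSet.mp hf₁).ne
  have hcd : c ≠ d := ((⊤ : SimpleGraph V).mem_edgeSet.mp hf₂).ne
  have hnoshare : ∀ v : V, v ∈ s(a, b) → v ∈ s(c, d) → False := by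
    intro v hv1 hv2
    exact hnadj (lineGraph_adj_iff_exists.mpr ⟨hne, v, hv1, hv2⟩)
  have hac : a ≠ c := fun h => hnoshare a (by simp) (by simp [h])
  have had : a ≠ d := fun h => hnoshare a (by simp) (by simp [h])
  have hbc : b ≠ c := fun h => hnoshare b (by simp) (by simp [h])
  have hbd : b ≠ d := fun h => hnoshare b (by simp) (by simp [h])
  rw [cross_eq _ _ _ rfl rfl hac had hbc hbd, pre_ncard]
  have : ({s(a, c), s(a, d), s(b, c), s(b, d)} : Set (Sym2 V)) ∩ (⊤ : SimpleGraph V).edgeSet =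
      {s(a, c), s(a, d), s(b, c), s(b, d)} := by
    refine Set.inter_eq_left.mpr ?_
    rintro g (rfl | rfl | rfl | rfl) <;> rw [SimpleGraph.mem_edgeSet, top_adj] <;> assumption
  rw [this]
  refine ncard4 ?_ ?_ ?_ ?_ ?_ ?_ <;> simp only [ne_eq, Sym2.eq_iff] <;> aesop

/-- for a pseudo strongly regular graph `G` with two non-incident edges, `L(G)` is
pseudo strongly regular with parameter `μ = 4` iff `G` is the complete graph on `n ≥ 4`
vertices. -/
theorem stmt_12 {V : Type*} [Fintype V] [DecidableEq V] (G : SimpleGraph V) [DecidableRel G.Adj]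
    (n k μ : ℕ) (hG : G.IsPseudoSRG n k μ)
    (hne : ∃ a b c d : V, G.Adj a b ∧ G.Adj c d ∧ a ≠ c ∧ a ≠ d ∧ b ≠ c ∧ b ≠ d) :
    (∃ m d : ℕ, G.lineGraph.IsPseudoSRG m d 4) ↔ (G = ⊤ ∧ 4 ≤ Fintype.card V) := by
  obtain ⟨hn, hdeg, hcom⟩ := hG
  constructor
  · rintro ⟨m, dd, hm, hd, hc⟩
    obtain ⟨a, b, c, d, hab, hcd, hac, had, hbc, hbd⟩ := hne
    obtain ⟨h1, h2, _, _⟩ := key_cross G hc hab hcd hac had hbc hbd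
    have hk3 : 3 ≤ k := by
      have hsub : ({b, c, d} : Set V) ⊆ G.neighborSet a := by
        rintro z (rfl | rfl | rfl) <;> rw [mem_neighborSet]
        exacts [hab, h1, h2]
      have h3' : ({b, c, d} : Set V).ncard = 3 := by
        rw [Set.ncard_insert_of_notMem (by simp [hbc, hbd]) ((Set.finite_singleton d).insert c),
          Set.ncard_pair hcd.ne]
      calc 3 = ({b, c, d} : Set V).ncard := h3'.symm
        _ ≤ (G.neighborSet a).ncard := Set.ncard_le_ncard hsub (Set.toFinite _)
        _ = k := hdeg a
    have hcomplete : G = ⊤ := by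
      ext u v
      simp only [top_adj]
      constructor
      · exact Adj.ne
      · intro huv
        by_contra hadj
        have hu := hdeg u
        have hv := hdeg v
        obtain ⟨x, hx⟩ : (G.neighborSet u).Nonempty :=
          Set.nonempty_of_ncard_ne_zero (by omega)
        rw [mem_neighborSet] at hx
        have hxv : x ≠ v := by rintro rfl; exact hadj hx
        obtain ⟨w, hw, hwx⟩ : (G.neighborSet v \ {x}).Nonempty := by
          apply Set.nonempty_of_ncard_ne_zero
          have hle := Set.ncard_le_ncard_diff_add_ncard (G.neighborSet v) {x}
            (Set.finite_singleton x)
          rw [Set.ncard_singleton] at hle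
          omega
        rw [mem_neighborSet] at hw
        have hwu : w ≠ u := by rintro rfl; exact hadj hw.symm
        exact hadj (key_cross G hc hx hw huv (Ne.symm hwu) hxv
          (fun h => hwx (by simp [h.symm]))).1
    refine ⟨hcomplete, ?_⟩
    have h4' : ({a, b, c, d} : Set V).ncard = 4 := ncard4 hab.ne hac had hbc hbd hcd.ne
    calc 4 = ({a, b, c, d} : Set V).ncard := h4'.symm
      _ ≤ (Set.univ : Set V).ncard := Set.ncard_le_ncard (Set.subset_univ _) (Set.toFinite _)
      _ = Fintype.card V := by rw [Set.ncard_univ, Nat.card_eq_fintype_card]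
  · rintro ⟨rfl, hcard⟩
    exact ⟨_, 2 * (Fintype.card V - 2), rfl, top_line_degree,
      fun e₁ e₂ h1 h2 => top_line_common e₁ e₂ h1 h2⟩
end

section
/- Let G be a pseudo strongly regular graph containing two non-incident (vertex-disjoint) edges. Then the line graph L(G) is pseudo strongly regular with parameter μ = 1 if and only if every two distinct vertices of G have at most one common neighbour (i.e., G is (diamond, K₄, C₄)-free) and every two non-incident edges of G lie on a common path on 4 vertices (i.e., for every two non-incident edges e₁, e₂ of G there is an edge of G joining an endpoint of e₁ to an endpoint of e₂). -/
/-!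
If the edges `ab` and `cd` of `G` are disjoint, their common neighbours in `L(G)` are exactly the
edges of `G` between `{a, b}` and `{c, d}`, so `μ = 1` for `L(G)` says that there is exactly one
such edge. A 4-cycle `u w₁ v w₂` yields two of them for `u w₁` and `v w₂`. Conversely, two such
edges either share an endpoint, closing a triangle with a pendant edge, or close a 4-cycle. In a
regular graph where distinct vertices have at most one common neighbour and non-incident edges are
joined, both are impossible: joining a second neighbour of the pendant vertex to the opposite side
of the triangle creates two common neighbours. Finally `L(G)` of a `k`-regular `G` is
`(2k - 2)`-regular.
-/
open SimpleGraph

theorem Sym2.forall_mem_mk_notMem_mk_iff {α : Type*} {a b c d : α} :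
    (∀ v ∈ s(a, b), v ∉ s(c, d)) ↔ a ≠ c ∧ a ≠ d ∧ b ≠ c ∧ b ≠ d := by
  simp [Sym2.mem_iff, and_assoc]

namespace SimpleGraph

variable {V : Type*} {G : SimpleGraph V}

lemma exists_adj_mem_of_mem_edgeSet {e : Sym2 V} (he : e ∈ G.edgeSet) {x : V} (hx : x ∈ e) :
    ∃ x' ∈ e, G.Adj x x' :=
  ⟨_, Sym2.other_mem hx, by rwa [← Sym2.other_spec hx, mem_edgeSet] at he⟩

lemma lineGraph_ne_and_not_adj_iff {e₁ e₂ : G.edgeSet} :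
    e₁ ≠ e₂ ∧ ¬G.lineGraph.Adj e₁ e₂ ↔ ∀ v ∈ (e₁ : Sym2 V), v ∉ (e₂ : Sym2 V) := by
  rw [lineGraph_adj_iff_exists]
  constructor
  · rintro ⟨hne, hadj⟩ v hv₁ hv₂
    exact hadj ⟨hne, v, hv₁, hv₂⟩
  · intro hdisj
    exact ⟨fun h => hdisj _ (Sym2.out_fst_mem _) (h ▸ Sym2.out_fst_mem _),
      fun ⟨_, v, hv₁, hv₂⟩ => hdisj v hv₁ hv₂⟩

lemma mem_lineGraph_commonNeighbors_iff {e₁ e₂ f : G.edgeSet}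
    (hdisj : ∀ v ∈ (e₁ : Sym2 V), v ∉ (e₂ : Sym2 V)) :
    f ∈ G.lineGraph.commonNeighbors e₁ e₂ ↔
      ∃ x ∈ (e₁ : Sym2 V), ∃ y ∈ (e₂ : Sym2 V), (f : Sym2 V) = s(x, y) := by
  simp only [mem_commonNeighbors, lineGraph_adj_iff_exists]
  constructor
  · rintro ⟨⟨-, x, hx₁, hxf⟩, ⟨-, y, hy₂, hyf⟩⟩
    have hxy : x ≠ y := fun h => hdisj x hx₁ (h ▸ hy₂)
    exact ⟨x, hx₁, y, hy₂, (Sym2.mem_and_mem_iff hxy).mp ⟨hxf, hyf⟩⟩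
  · rintro ⟨x, hx₁, y, hy₂, hf⟩
    refine ⟨⟨?_, x, hx₁, hf ▸ Sym2.mem_mk_left x y⟩, ⟨?_, y, hy₂, hf ▸ Sym2.mem_mk_right x y⟩⟩
    · rintro rfl
      exact hdisj y (hf ▸ Sym2.mem_mk_right x y) hy₂
    · rintro rfl
      exact hdisj x hx₁ (hf ▸ Sym2.mem_mk_left x y)

lemma ncard_incidenceSet (v : V) : (G.incidenceSet v).ncard = (G.neighborSet v).ncard := by
  classical
  exact Nat.card_congr (G.incidenceSetEquivNeighborSet v)

lemma image_val_lineGraph_neighborSet {a b : V} (h : G.Adj a b) :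
    Subtype.val '' G.lineGraph.neighborSet ⟨s(a, b), h⟩ =
      (G.incidenceSet a ∪ G.incidenceSet b) \ {s(a, b)} := by
  ext e
  constructor
  · rintro ⟨f, hf, rfl⟩
    obtain ⟨hne, v, hv, hvf⟩ := lineGraph_adj_iff_exists.mp hf
    refine ⟨?_, fun h' => hne (Subtype.ext h'.symm)⟩
    rcases Sym2.mem_iff.mp hv with rfl | rfl
    exacts [Or.inl ⟨f.2, hvf⟩, Or.inr ⟨f.2, hvf⟩]
  · rintro ⟨hinc, hne⟩
    have he : e ∈ G.edgeSet := hinc.elim And.left And.left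
    refine ⟨⟨e, he⟩, lineGraph_adj_iff_exists.mpr
      ⟨fun h' => hne (congrArg Subtype.val h').symm, ?_⟩, rfl⟩
    rcases hinc with ⟨-, hv⟩ | ⟨-, hv⟩
    exacts [⟨a, Sym2.mem_mk_left a b, hv⟩, ⟨b, Sym2.mem_mk_right a b, hv⟩]

lemma ncard_lineGraph_neighborSet [Finite V] {a b : V} (h : G.Adj a b) :
    (G.lineGraph.neighborSet ⟨s(a, b), h⟩).ncard =
      (G.neighborSet a).ncard + (G.neighborSet b).ncard - 2 := by
  have hunion := Set.ncard_union_add_ncard_inter (G.incidenceSet a) (G.incidenceSet b)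
  rw [G.incidenceSet_inter_incidenceSet_of_adj h, Set.ncard_singleton, ncard_incidenceSet,
    ncard_incidenceSet] at hunion
  have hab : s(a, b) ∈ G.incidenceSet a ∪ G.incidenceSet b := Or.inl ⟨h, Sym2.mem_mk_left a b⟩
  rw [← Set.ncard_image_of_injective _ Subtype.val_injective, image_val_lineGraph_neighborSet h,
    Set.ncard_sdiff_singleton_of_mem hab]
  omega

/-- The paper's (diamond, K₄, C₄)-freeness. -/
def AtMostOneCommonNeighbor (G : SimpleGraph V) : Prop :=
  ∀ u v : V, u ≠ v → (G.commonNeighbors u v).ncard ≤ 1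

/-- Every two non-incident edges lie on a common path on four vertices. -/
def NonincidentEdgesJoined (G : SimpleGraph V) : Prop :=
  ∀ a b c d : V, G.Adj a b → G.Adj c d → a ≠ c → a ≠ d → b ≠ c → b ≠ d →
    (G.Adj a c ∨ G.Adj a d ∨ G.Adj b c ∨ G.Adj b d)

lemma AtMostOneCommonNeighbor.eq [Finite V] (hG : G.AtMostOneCommonNeighbor) {u v w₁ w₂ : V}
    (huv : u ≠ v) (hu₁ : G.Adj u w₁) (hv₁ : G.Adj v w₁) (hu₂ : G.Adj u w₂) (hv₂ : G.Adj v w₂) :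
    w₁ = w₂ :=
  (Set.ncard_le_one_iff).mp (hG u v huv) ⟨hu₁, hv₁⟩ ⟨hu₂, hv₂⟩

lemma nonincidentEdgesJoined_iff : G.NonincidentEdgesJoined ↔
    ∀ e₁ ∈ G.edgeSet, ∀ e₂ ∈ G.edgeSet, (∀ v ∈ e₁, v ∉ e₂) →
      ∃ x ∈ e₁, ∃ y ∈ e₂, G.Adj x y := by
  constructor
  · intro h e₁ he₁ e₂ he₂ hdisj
    induction e₁ using Sym2.ind with | _ a b => ?_
    induction e₂ using Sym2.ind with | _ c d => ?_
    obtain ⟨hac, had, hbc, hbd⟩ := Sym2.forall_mem_mk_notMem_mk_iff.mp hdisj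
    simp only [Sym2.mem_iff, exists_eq_or_imp, exists_eq_left]
    exact or_assoc.mpr (h a b c d he₁ he₂ hac had hbc hbd)
  · intro h a b c d hab hcd hac had hbc hbd
    obtain ⟨x, hx, y, hy, hxy⟩ :=
      h _ hab _ hcd (Sym2.forall_mem_mk_notMem_mk_iff.mpr ⟨hac, had, hbc, hbd⟩)
    rcases Sym2.mem_iff.mp hx with rfl | rfl <;> rcases Sym2.mem_iff.mp hy with rfl | rfl <;>
      simp only [hxy, true_or, or_true]

lemma false_of_triangle_of_pendant [Finite V] {k : ℕ} (hk : ∀ v : V, (G.neighborSet v).ncard = k)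
    (h₁ : G.AtMostOneCommonNeighbor) (h₂ : G.NonincidentEdgesJoined) {a b c d : V}
    (hab : G.Adj a b) (hac : G.Adj a c) (had : G.Adj a d) (hcd : G.Adj c d) (hbc : b ≠ c)
    (hbd : b ≠ d) : False := by
  have hnbc : ¬G.Adj b c := fun h => hbd (h₁.eq hac.ne hab h.symm had hcd)
  have hnbd : ¬G.Adj b d := fun h => hbc (h₁.eq had.ne hab h.symm hac hcd.symm)
  obtain ⟨x, hbx, hxa⟩ : ∃ x, G.Adj b x ∧ x ≠ a := by
    by_contra! h
    have hb : (G.neighborSet b).ncard ≤ 1 :=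
      (Set.ncard_le_ncard (fun x hx => h x hx) (Set.finite_singleton a)).trans_eq
        (Set.ncard_singleton a)
    have ha : 2 ≤ (G.neighborSet a).ncard :=
      (Set.ncard_pair hcd.ne).symm.trans_le
        (Set.ncard_le_ncard (Set.pair_subset hac had))
    rw [hk] at ha hb
    omega
  have hxc : x ≠ c := fun h => hnbc (h ▸ hbx)
  have hxd : x ≠ d := fun h => hnbd (h ▸ hbx)
  rcases h₂ b x c d hbx hcd hbc hbd hxc hxd with h | h | h | h
  · exact hnbc h
  · exact hnbd h
  · exact hbc (h₁.eq hxa.symm hab hbx.symm hac h)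
  · exact hbd (h₁.eq hxa.symm hab hbx.symm had h)

lemma eq_of_adj_of_adj_of_disjoint [Finite V] {k : ℕ} (hk : ∀ v : V, (G.neighborSet v).ncard = k)
    (h₁ : G.AtMostOneCommonNeighbor) (h₂ : G.NonincidentEdgesJoined) {e₁ e₂ : Sym2 V}
    (he₁ : e₁ ∈ G.edgeSet) (he₂ : e₂ ∈ G.edgeSet) (hdisj : ∀ v ∈ e₁, v ∉ e₂) {x y₁ y₂ : V}
    (hx : x ∈ e₁) (hy₁ : y₁ ∈ e₂) (hy₂ : y₂ ∈ e₂) (hxy₁ : G.Adj x y₁) (hxy₂ : G.Adj x y₂) :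
    y₁ = y₂ := by
  by_contra hne
  have hy : G.Adj y₁ y₂ := by rwa [(Sym2.mem_and_mem_iff hne).mp ⟨hy₁, hy₂⟩] at he₂
  obtain ⟨x', hx', hxx'⟩ := exists_adj_mem_of_mem_edgeSet he₁ hx
  exact false_of_triangle_of_pendant hk h₁ h₂ hxx' hxy₁ hxy₂ hy
    (fun h => hdisj x' hx' (h ▸ hy₁)) (fun h => hdisj x' hx' (h ▸ hy₂))

lemma eq_and_eq_of_adj_of_adj_of_disjoint [Finite V] {k : ℕ}
    (hk : ∀ v : V, (G.neighborSet v).ncard = k) (h₁ : G.AtMostOneCommonNeighbor)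
    (h₂ : G.NonincidentEdgesJoined) {e₁ e₂ : Sym2 V} (he₁ : e₁ ∈ G.edgeSet) (he₂ : e₂ ∈ G.edgeSet)
    (hdisj : ∀ v ∈ e₁, v ∉ e₂) {x₁ x₂ y₁ y₂ : V} (hx₁ : x₁ ∈ e₁) (hx₂ : x₂ ∈ e₁) (hy₁ : y₁ ∈ e₂)
    (hy₂ : y₂ ∈ e₂) (hxy₁ : G.Adj x₁ y₁) (hxy₂ : G.Adj x₂ y₂) : x₁ = x₂ ∧ y₁ = y₂ := by
  by_cases hx : x₁ = x₂
  · subst hx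
    exact ⟨rfl, eq_of_adj_of_adj_of_disjoint hk h₁ h₂ he₁ he₂ hdisj hx₁ hy₁ hy₂ hxy₁ hxy₂⟩
  by_cases hy : y₁ = y₂
  · subst hy
    exact (hx (eq_of_adj_of_adj_of_disjoint hk h₁ h₂ he₂ he₁ (fun v hv₂ hv₁ => hdisj v hv₁ hv₂)
      hy₁ hx₁ hx₂ hxy₁.symm hxy₂.symm)).elim
  -- otherwise `x₁ y₁ y₂ x₂` is a 4-cycle, so `x₁` and `y₂` have two common neighbours
  have hx' : G.Adj x₁ x₂ := by rwa [(Sym2.mem_and_mem_iff hx).mp ⟨hx₁, hx₂⟩] at he₁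
  have hy' : G.Adj y₁ y₂ := by rwa [(Sym2.mem_and_mem_iff hy).mp ⟨hy₁, hy₂⟩] at he₂
  have hyx := h₁.eq (fun h : x₁ = y₂ => hdisj x₁ hx₁ (h ▸ hy₂)) hxy₁ hy'.symm hx' hxy₂.symm
  exact (hdisj x₂ hx₂ (hyx ▸ hy₁)).elim

lemma ncard_lineGraph_commonNeighbors_eq_one [Finite V] {k : ℕ}
    (hk : ∀ v : V, (G.neighborSet v).ncard = k) (h₁ : G.AtMostOneCommonNeighbor)
    (h₂ : G.NonincidentEdgesJoined) {e₁ e₂ : G.edgeSet}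
    (hdisj : ∀ v ∈ (e₁ : Sym2 V), v ∉ (e₂ : Sym2 V)) :
    (G.lineGraph.commonNeighbors e₁ e₂).ncard = 1 := by
  obtain ⟨x, hx, y, hy, hxy⟩ := nonincidentEdgesJoined_iff.mp h₂ _ e₁.2 _ e₂.2 hdisj
  refine Set.ncard_eq_one.mpr ⟨⟨s(x, y), hxy⟩, Set.eq_singleton_iff_unique_mem.mpr
    ⟨(mem_lineGraph_commonNeighbors_iff hdisj).mpr ⟨x, hx, y, hy, rfl⟩, fun f hf => ?_⟩⟩
  obtain ⟨x', hx', y', hy', hf⟩ := (mem_lineGraph_commonNeighbors_iff hdisj).mp hf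
  have hxy' : G.Adj x' y' := by simpa [hf] using f.2
  obtain ⟨rfl, rfl⟩ :=
    eq_and_eq_of_adj_of_adj_of_disjoint hk h₁ h₂ e₁.2 e₂.2 hdisj hx' hx hy' hy hxy' hxy
  exact Subtype.ext hf

lemma atMostOneCommonNeighbor_of_lineGraph [Finite V]
    (h : ∀ e₁ e₂, e₁ ≠ e₂ → ¬G.lineGraph.Adj e₁ e₂ →
      (G.lineGraph.commonNeighbors e₁ e₂).ncard = 1) :
    G.AtMostOneCommonNeighbor := by
  refine fun u v huv => (Set.ncard_le_one_iff).mpr fun {w₁ w₂} ⟨hu₁, hv₁⟩ ⟨hu₂, hv₂⟩ => ?_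
  by_contra hw
  -- in the 4-cycle `u w₁ v w₂`, the edges `u w₁`, `v w₂` have common neighbours `u w₂`, `w₁ v`
  have hdisj : ∀ z ∈ s(u, w₁), z ∉ s(v, w₂) :=
    Sym2.forall_mem_mk_notMem_mk_iff.mpr ⟨huv, hu₂.ne, hv₁.ne', hw⟩
  obtain ⟨hne, hnadj⟩ :=
    (lineGraph_ne_and_not_adj_iff (e₁ := ⟨_, hu₁⟩) (e₂ := ⟨_, hv₂⟩)).mpr hdisj
  obtain ⟨f, hf⟩ := Set.ncard_eq_one.mp (h _ _ hne hnadj)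
  have hf₁ : ⟨s(u, w₂), hu₂⟩ ∈ G.lineGraph.commonNeighbors ⟨_, hu₁⟩ ⟨_, hv₂⟩ :=
    (mem_lineGraph_commonNeighbors_iff hdisj).mpr
      ⟨u, Sym2.mem_mk_left _ _, w₂, Sym2.mem_mk_right _ _, rfl⟩
  have hf₂ : ⟨s(w₁, v), hv₁.symm⟩ ∈ G.lineGraph.commonNeighbors ⟨_, hu₁⟩ ⟨_, hv₂⟩ :=
    (mem_lineGraph_commonNeighbors_iff hdisj).mpr
      ⟨w₁, Sym2.mem_mk_right _ _, v, Sym2.mem_mk_left _ _, rfl⟩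
  rw [hf, Set.mem_singleton_iff] at hf₁ hf₂
  have := congrArg Subtype.val (hf₁.trans hf₂.symm)
  simp [hu₁.ne, huv] at this

lemma nonincidentEdgesJoined_of_lineGraph
    (h : ∀ e₁ e₂, e₁ ≠ e₂ → ¬G.lineGraph.Adj e₁ e₂ →
      (G.lineGraph.commonNeighbors e₁ e₂).ncard = 1) :
    G.NonincidentEdgesJoined := by
  refine nonincidentEdgesJoined_iff.mpr fun e₁ he₁ e₂ he₂ hdisj => ?_
  obtain ⟨hne, hnadj⟩ :=
    (lineGraph_ne_and_not_adj_iff (e₁ := ⟨e₁, he₁⟩) (e₂ := ⟨e₂, he₂⟩)).mpr hdisj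
  obtain ⟨f, hf⟩ := Set.nonempty_of_ncard_ne_zero (h _ _ hne hnadj ▸ one_ne_zero)
  obtain ⟨x, hx, y, hy, hfxy⟩ := (mem_lineGraph_commonNeighbors_iff hdisj).mp hf
  exact ⟨x, hx, y, hy, by simpa [hfxy] using f.2⟩

lemma ncard_lineGraph_neighborSet_of_regular [Finite V] {k : ℕ}
    (hk : ∀ v : V, (G.neighborSet v).ncard = k) (e : G.edgeSet) :
    (G.lineGraph.neighborSet e).ncard = 2 * k - 2 := by
  obtain ⟨e, he⟩ := e
  induction e using Sym2.ind with | _ a b => ?_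
  rw [ncard_lineGraph_neighborSet he, hk, hk]
  omega

end SimpleGraph

theorem stmt_14_general {V : Type*} [Fintype V] [DecidableEq V] (G : SimpleGraph V) [DecidableRel G.Adj]
    (n k μ : ℕ) (hG : G.IsPseudoSRG n k μ) :
    (∃ m d : ℕ, G.lineGraph.IsPseudoSRG m d 1) ↔
      ((∀ u v : V, u ≠ v → (G.commonNeighbors u v).ncard ≤ 1) ∧
        ∀ a b c d : V, G.Adj a b → G.Adj c d → a ≠ c → a ≠ d → b ≠ c → b ≠ d →
          (G.Adj a c ∨ G.Adj a d ∨ G.Adj b c ∨ G.Adj b d)) := by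
  obtain ⟨-, hk, -⟩ := hG
  constructor
  · rintro ⟨m, d, -, -, hμ⟩
    exact ⟨atMostOneCommonNeighbor_of_lineGraph hμ, nonincidentEdgesJoined_of_lineGraph hμ⟩
  · rintro ⟨h₁, h₂⟩
    refine ⟨_, 2 * k - 2, rfl, ncard_lineGraph_neighborSet_of_regular hk, fun e₁ e₂ hne hnadj => ?_⟩
    exact ncard_lineGraph_commonNeighbors_eq_one hk h₁ h₂
      (lineGraph_ne_and_not_adj_iff.mp ⟨hne, hnadj⟩)

/-- for a pseudo strongly regular graph `G` with two non-incident edges, `L(G)` is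
pseudo strongly regular with parameter `μ = 1` iff `G` is (diamond, K₄, C₄)-free (any two
distinct vertices have at most one common neighbour) and every two non-incident edges of `G` lie
on a common path on 4 vertices. -/
theorem stmt_14 {V : Type*} [Fintype V] [DecidableEq V] (G : SimpleGraph V) [DecidableRel G.Adj]
    (n k μ : ℕ) (hG : G.IsPseudoSRG n k μ)
    (hne : ∃ a b c d : V, G.Adj a b ∧ G.Adj c d ∧ a ≠ c ∧ a ≠ d ∧ b ≠ c ∧ b ≠ d) :
    (∃ m d : ℕ, G.lineGraph.IsPseudoSRG m d 1) ↔
      ((∀ u v : V, u ≠ v → (G.commonNeighbors u v).ncard ≤ 1) ∧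
        ∀ a b c d : V, G.Adj a b → G.Adj c d → a ≠ c → a ≠ d → b ≠ c → b ≠ d →
          (G.Adj a c ∨ G.Adj a d ∨ G.Adj b c ∨ G.Adj b d)) :=
  stmt_14_general G n k μ hG
end

section
/- Let G be a pseudo strongly regular graph. Then the line graph L(G) is pseudo strongly regular with parameter μ = 0 if and only if every connected component of G is a single vertex, a single edge (K₂), or a triangle (K₃). -/
open SimpleGraph

/-!
Two distinct non-adjacent edges of `G` have a common neighbour in `L(G)` exactly when they are
the end edges of a path on four vertices, so `L(G)` has `μ = 0` iff `L(G)` is a disjoint union of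
cliques iff `G` contains no path on four vertices. The line graph of a `k`-regular graph is
`(2k - 2)`-regular. In a regular graph without such a path, two vertices at distance two cannot
exist (a second neighbour of one of them would extend them to a path), so every component is a
clique, and a vertex of degree three would again produce a path. Conversely, components with at
most three vertices leave no room for a path on four vertices.
-/

namespace SimpleGraph

variable {V : Type*} {G : SimpleGraph V}

theorem pathGraph_four_isContained_iff :
    pathGraph 4 ⊑ G ↔
      ∃ a b c d, G.Adj a b ∧ G.Adj b c ∧ G.Adj c d ∧ a ≠ c ∧ a ≠ d ∧ b ≠ d := by
  constructor
  · rintro ⟨f⟩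
    have hadj (i j : Fin 4) (h : i.val + 1 = j.val) : G.Adj (f i) (f j) :=
      f.toHom.map_adj (pathGraph_adj.2 (Or.inl h))
    exact ⟨f 0, f 1, f 2, f 3, hadj 0 1 rfl, hadj 1 2 rfl, hadj 2 3 rfl,
      f.injective.ne (by decide), f.injective.ne (by decide), f.injective.ne (by decide)⟩
  · rintro ⟨a, b, c, d, hab, hbc, hcd, hac, had, hbd⟩
    refine ⟨⟨⟨![a, b, c, d], fun {i j} h => ?_⟩, fun i j h => ?_⟩⟩
    · rw [pathGraph_adj] at h
      fin_cases i <;> fin_cases j <;> simp_all [G.adj_comm]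
    · fin_cases i <;> fin_cases j <;> simp_all [hab.ne, hbc.ne, hcd.ne, eq_comm]

/-- Every connected component is a clique. -/
def IsClusterGraph (G : SimpleGraph V) : Prop :=
  ∀ ⦃u v w⦄, G.Adj u v → G.Adj v w → u ≠ w → G.Adj u w

theorem commonNeighbors_ncard_eq_zero_iff_isClusterGraph [Finite V] :
    (∀ u v, u ≠ v → ¬G.Adj u v → (G.commonNeighbors u v).ncard = 0) ↔
      G.IsClusterGraph := by
  simp only [Set.ncard_eq_zero (Set.toFinite _), Set.eq_empty_iff_forall_notMem,
    mem_commonNeighbors]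
  constructor
  · intro h u v w huv hvw huw
    by_contra hnadj
    exact h u w huw hnadj v ⟨huv, hvw.symm⟩
  · rintro h u v huv hnadj x ⟨hux, hvx⟩
    exact hnadj (h hux hvx.symm huv)

theorem exists_isPseudoSRG_zero_iff [Fintype V] :
    (∃ n k, G.IsPseudoSRG n k 0) ↔
      (∃ k, ∀ v, (G.neighborSet v).ncard = k) ∧ G.IsClusterGraph := by
  rw [← commonNeighbors_ncard_eq_zero_iff_isClusterGraph]
  constructor
  · rintro ⟨-, k, -, hdeg, hμ⟩
    exact ⟨⟨k, hdeg⟩, hμ⟩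
  · rintro ⟨⟨k, hdeg⟩, hμ⟩
    exact ⟨_, k, rfl, hdeg, hμ⟩

theorem lineGraph_isClusterGraph_iff : G.lineGraph.IsClusterGraph ↔ (pathGraph 4).Free G := by
  rw [Free, pathGraph_four_isContained_iff]
  constructor
  · rintro hC ⟨a, b, c, d, hab, hbc, hcd, hac, had, hbd⟩
    have h₁ : G.lineGraph.Adj ⟨s(a, b), hab⟩ ⟨s(b, c), hbc⟩ := lineGraph_adj_iff_exists.2
      ⟨by simp [Subtype.ext_iff, hac, hab.ne], b, Sym2.mem_mk_right a b, Sym2.mem_mk_left b c⟩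
    have h₂ : G.lineGraph.Adj ⟨s(b, c), hbc⟩ ⟨s(c, d), hcd⟩ := lineGraph_adj_iff_exists.2
      ⟨by simp [Subtype.ext_iff, hbd, hbc.ne], c, Sym2.mem_mk_right b c, Sym2.mem_mk_left c d⟩
    obtain ⟨-, v, hva, hvd⟩ :=
      lineGraph_adj_iff_exists.1 (hC h₁ h₂ (by simp [Subtype.ext_iff, hac, had]))
    rw [Sym2.mem_iff] at hva hvd
    rcases hva with rfl | rfl <;> rcases hvd with rfl | rfl
    exacts [hac rfl, had rfl, hbc.ne rfl, hbd rfl]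
  · rintro hP ⟨e, he⟩ ⟨g, hg⟩ ⟨f, hf⟩ heg hgf hef
    by_contra hnadj
    have hdisj (z : V) (hze : z ∈ e) (hzf : z ∈ f) : False :=
      hnadj (lineGraph_adj_iff_exists.2 ⟨hef, z, hze, hzf⟩)
    obtain ⟨-, x, hxe, hxg⟩ := lineGraph_adj_iff_exists.1 heg
    obtain ⟨-, y, hyg, hyf⟩ := lineGraph_adj_iff_exists.1 hgf
    have hxy : x ≠ y := by rintro rfl; exact hdisj x hxe hyf
    obtain ⟨a, rfl⟩ := Sym2.mem_iff_exists.1 hxe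
    obtain ⟨d, rfl⟩ := Sym2.mem_iff_exists.1 hyf
    obtain rfl := (Sym2.mem_and_mem_iff hxy).1 ⟨hxg, hyg⟩
    refine hP ⟨a, x, y, d, G.adj_symm he, hg, hf, ?_, ?_, ?_⟩ <;> rintro rfl
    · exact hdisj a (Sym2.mem_mk_right x a) (Sym2.mem_mk_left a d)
    · exact hdisj a (Sym2.mem_mk_right x a) (Sym2.mem_mk_right y a)
    · exact hdisj x (Sym2.mem_mk_left x a) (Sym2.mem_mk_right y x)

theorem lineGraph_neighborSet_ncard_add_two [Finite V] {a b : V} (h : G.Adj a b) :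
    (G.lineGraph.neighborSet ⟨s(a, b), h⟩).ncard + 2 =
      (G.neighborSet a).ncard + (G.neighborSet b).ncard := by
  classical
  have himage : Subtype.val '' G.lineGraph.neighborSet ⟨s(a, b), h⟩ =
      (G.incidenceSet a ∪ G.incidenceSet b) \ {s(a, b)} := by
    ext e
    simp only [Set.mem_image, mem_neighborSet, lineGraph_adj_iff_exists, Subtype.exists,
      Set.mem_sdiff, Set.mem_union, incidenceSet, Set.mem_ofPred_eq, Set.mem_singleton_iff]
    grind
  have hinc (v : V) : (G.incidenceSet v).ncard = (G.neighborSet v).ncard :=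
    Set.ncard_congr' (G.incidenceSetEquivNeighborSet v)
  have hunion := Set.ncard_union_add_ncard_inter (G.incidenceSet a) (G.incidenceSet b)
  have hdiff := Set.ncard_sdiff_singleton_add_one (s := G.incidenceSet a ∪ G.incidenceSet b)
    (Or.inl ((G.mk'_mem_incidenceSet_left_iff).2 h))
  rw [G.incidenceSet_inter_incidenceSet_of_adj h, Set.ncard_singleton, hinc, hinc] at hunion
  rw [← Set.ncard_image_of_injective _ Subtype.val_injective, himage]
  omega

theorem lineGraph_neighborSet_ncard_of_regular [Finite V] {k : ℕ}
    (hdeg : ∀ v, (G.neighborSet v).ncard = k) (e : G.edgeSet) :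
    (G.lineGraph.neighborSet e).ncard = 2 * k - 2 := by
  obtain ⟨e, he⟩ := e
  induction e using Sym2.ind with
  | _ a b =>
    have := lineGraph_neighborSet_ncard_add_two (a := a) (b := b) he
    rw [hdeg, hdeg] at this
    omega

theorem IsClusterGraph.eq_or_adj_of_reachable (hC : G.IsClusterGraph) {v w : V}
    (h : G.Reachable v w) : v = w ∨ G.Adj v w := by
  obtain ⟨p⟩ := h
  induction p with
  | nil => exact Or.inl rfl
  | @cons u x w hux _ ih =>
    rcases ih with rfl | hxw
    · exact Or.inr hux
    · rcases eq_or_ne u w with rfl | huw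
      · exact Or.inl rfl
      · exact Or.inr (hC hux hxw huw)

theorem IsClusterGraph.ncard_reachable_le [Finite V] (hC : G.IsClusterGraph) (v : V) :
    {w | G.Reachable v w}.ncard ≤ (G.neighborSet v).ncard + 1 :=
  (Set.ncard_le_ncard fun _ hw => (hC.eq_or_adj_of_reachable hw).imp Eq.symm id).trans
    (Set.ncard_insert_le v _)

theorem isClusterGraph_of_regular_of_free [Finite V] {k : ℕ}
    (hdeg : ∀ v, (G.neighborSet v).ncard = k) (hP : (pathGraph 4).Free G) :
    G.IsClusterGraph := by
  rw [Free, pathGraph_four_isContained_iff] at hP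
  intro u v w huv hvw huw
  by_contra huw'
  have hk : 1 < k := by
    rw [← hdeg v, Set.one_lt_ncard_iff]
    exact ⟨u, w, huv.symm, hvw, huw⟩
  obtain ⟨x, hux, hxv⟩ := Set.exists_ne_of_one_lt_ncard (hdeg u ▸ hk) v
  exact hP ⟨x, u, v, w, G.adj_symm hux, huv, hvw, hxv, fun h => huw' (h ▸ hux), huw⟩

theorem IsClusterGraph.ncard_neighborSet_le_two [Finite V] (hC : G.IsClusterGraph)
    (hP : (pathGraph 4).Free G) (v : V) : (G.neighborSet v).ncard ≤ 2 := by
  rw [Free, pathGraph_four_isContained_iff] at hP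
  by_contra! h
  obtain ⟨a, b, c, ha, hb, hc, hab, hac, hbc⟩ := (Set.two_lt_ncard_iff (Set.toFinite _)).1 h
  exact hP ⟨a, b, v, c, hC (G.adj_symm ha) hb hab, G.adj_symm hb, hc, ha.ne.symm, hac, hbc⟩

theorem pathGraph_free_of_ncard_reachable_le_three [Finite V]
    (h : ∀ v, {w | G.Reachable v w}.ncard ≤ 3) : (pathGraph 4).Free G := by
  rw [Free, pathGraph_four_isContained_iff]
  rintro ⟨a, b, c, d, hab, hbc, hcd, hac, had, hbd⟩
  have hsub : {a, b, c, d} ⊆ {w | G.Reachable a w} := by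
    rintro w (rfl | rfl | rfl | rfl)
    · exact Reachable.refl w
    · exact hab.reachable
    · exact hab.reachable.trans hbc.reachable
    · exact (hab.reachable.trans hbc.reachable).trans hcd.reachable
  have hcard : ({a, b, c, d} : Set V).ncard = 4 := by
    rw [Set.ncard_insert_of_notMem, Set.ncard_insert_of_notMem, Set.ncard_pair hcd.ne] <;>
      simp [hab.ne, hac, had, hbc.ne, hbd]
  have := Set.ncard_le_ncard hsub
  have := h a
  omega

end SimpleGraph

/-- for a pseudo strongly regular graph `G`, the line graph `L(G)` is pseudo
strongly regular with parameter `μ = 0` iff every connected component of `G` is a single vertex,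
a single edge, or a triangle (equivalently: any two reachable vertices are equal or adjacent, and
every component has at most 3 vertices). -/
theorem stmt_15 {V : Type*} [Fintype V] [DecidableEq V] (G : SimpleGraph V) [DecidableRel G.Adj]
    (n k μ : ℕ) (hG : G.IsPseudoSRG n k μ) :
    (∃ m d : ℕ, G.lineGraph.IsPseudoSRG m d 0) ↔
      ((∀ v w : V, G.Reachable v w → v = w ∨ G.Adj v w) ∧
        ∀ v : V, {w : V | G.Reachable v w}.ncard ≤ 3) := by
  obtain ⟨-, hdeg, -⟩ := hG
  rw [exists_isPseudoSRG_zero_iff, lineGraph_isClusterGraph_iff]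
  constructor
  · rintro ⟨-, hP⟩
    have hC := isClusterGraph_of_regular_of_free hdeg hP
    refine ⟨fun v w => hC.eq_or_adj_of_reachable, fun v => ?_⟩
    have := hC.ncard_reachable_le v
    have := hC.ncard_neighborSet_le_two hP v
    omega
  · rintro ⟨-, hsize⟩
    exact ⟨⟨2 * k - 2, lineGraph_neighborSet_ncard_of_regular hdeg⟩,
      pathGraph_free_of_ncard_reachable_le_three hsize⟩
end

section
/- Let G be a finite simple graph containing at least one edge. Then the subdivision graph S(G) is edge-regular (for some parameters) if and only if G is 2-regular (every vertex of G has degree 2, i.e., G is a disjoint union of cycles). -/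
open SimpleGraph

/-- The subdivision graph of a simple graph: one new vertex in the middle of each edge. -/
def SimpleGraph.subdivision {V : Type*} (G : SimpleGraph V) :
    SimpleGraph (V ⊕ G.edgeSet) where
  Adj x y := match x, y with
    | Sum.inl v, Sum.inr e => v ∈ (e : Sym2 V)
    | Sum.inr e, Sum.inl v => v ∈ (e : Sym2 V)
    | _, _ => False
  symm := by constructor; rintro (v | e) (w | f) h <;> simp_all
  loopless := by constructor; rintro (v | e) h <;> simp_all

/-! A vertex of `S(G)` coming from `G` keeps its degree, every edge vertex has degree `2`, and
`S(G)` is bipartite, so adjacent vertices have no common neighbour. Hence `S(G)` is edge-regular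
exactly when all degrees of `G` equal `2`, the degree of any edge vertex, which exists since `G`
has an edge. -/

namespace SimpleGraph.subdivision

variable {V : Type*} (G : SimpleGraph V)

theorem neighborSet_inl (v : V) :
    G.subdivision.neighborSet (Sum.inl v) = Sum.inr '' {e : G.edgeSet | v ∈ (e : Sym2 V)} := by
  ext (w | e) <;> simp [neighborSet, subdivision]

theorem neighborSet_inr (e : G.edgeSet) :
    G.subdivision.neighborSet (Sum.inr e) = Sum.inl '' {v : V | v ∈ (e : Sym2 V)} := by
  ext (w | f) <;> simp [neighborSet, subdivision]

theorem ncard_neighborSet_inl (v : V) :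
    (G.subdivision.neighborSet (Sum.inl v)).ncard = (G.neighborSet v).ncard := by
  classical
  rw [neighborSet_inl, Set.ncard_image_of_injective _ Sum.inr_injective,
    ← Set.ncard_image_of_injective _ Subtype.val_injective,
    ← Set.ncard_congr' (G.incidenceSetEquivNeighborSet v)]
  congr 1
  ext s
  simp [incidenceSet, and_comm]

theorem ncard_neighborSet_inr (e : G.edgeSet) :
    (G.subdivision.neighborSet (Sum.inr e)).ncard = 2 := by
  obtain ⟨s, hs⟩ := e
  rw [neighborSet_inr, Set.ncard_image_of_injective _ Sum.inl_injective]
  induction s using Sym2.ind with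
  | h a b =>
    have hab : {v : V | v ∈ s(a, b)} = {a, b} := by ext v; simp
    rw [hab, Set.ncard_pair (G.mem_edgeSet.mp hs).ne]

theorem commonNeighbors_eq_empty {x y : V ⊕ G.edgeSet} (h : G.subdivision.Adj x y) :
    G.subdivision.commonNeighbors x y = ∅ := by
  ext (u | g) <;> rcases x with v | e <;> rcases y with w | f <;>
    simp_all [commonNeighbors, neighborSet, subdivision]

end SimpleGraph.subdivision

open SimpleGraph.subdivision in
theorem stmt_16_general {V : Type*} [Fintype V] (G : SimpleGraph V) [DecidableRel G.Adj]
    (he : ∃ a b : V, G.Adj a b) :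
    (∃ n k l : ℕ, G.subdivision.IsEdgeRegular n k l) ↔
      ∀ v : V, (G.neighborSet v).ncard = 2 := by
  constructor
  · rintro ⟨n, k, l, -, hk, -⟩ v
    obtain ⟨a, b, hab⟩ := he
    have hk2 : k = 2 := by
      rw [← hk (Sum.inr ⟨s(a, b), G.mem_edgeSet.mpr hab⟩), ncard_neighborSet_inr]
    rw [← ncard_neighborSet_inl, hk (Sum.inl v), hk2]
  · intro h2
    refine ⟨_, 2, 0, rfl, ?_, fun x y hxy => ?_⟩
    · rintro (v | e)
      · rw [ncard_neighborSet_inl, h2 v]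
      · exact ncard_neighborSet_inr G e
    · rw [commonNeighbors_eq_empty G hxy, Set.ncard_empty]

/-- for a graph `G` with at least one edge, the subdivision graph `S(G)` is
edge-regular (for some parameters) iff `G` is 2-regular. -/
theorem stmt_16 {V : Type*} [Fintype V] [DecidableEq V] (G : SimpleGraph V) [DecidableRel G.Adj]
    (he : ∃ a b : V, G.Adj a b) :
    (∃ n k l : ℕ, G.subdivision.IsEdgeRegular n k l) ↔
      ∀ v : V, (G.neighborSet v).ncard = 2 :=
  stmt_16_general G he
end

section
/- Let G be a finite simple graph containing at least one edge. Then the subdivision graph S(G) is not pseudo strongly regular (for any parameters). -/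
/-!
In `S(G)` the endpoints `a, b` of an edge are non-adjacent with the single common neighbour
`ab`, so `μ = 1`. Since `S(G)` is bipartite between vertices and edges of `G`, a vertex `v` and an
edge `e` have no common neighbour, so `μ = 1` forces `v ∈ e` for all `v` and `e`. Then `ab` is the
only edge of `G`, and the vertex `a` of `S(G)` has degree `1` while the vertex `ab` has degree `2`.
-/

open SimpleGraph

namespace SimpleGraph

variable {V : Type*} (G : SimpleGraph V)

@[simp]
lemma subdivision_adj_inl_inr (v : V) (e : G.edgeSet) :
    G.subdivision.Adj (.inl v) (.inr e) ↔ v ∈ (e : Sym2 V) := Iff.rfl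

@[simp]
lemma subdivision_adj_inr_inl (v : V) (e : G.edgeSet) :
    G.subdivision.Adj (.inr e) (.inl v) ↔ v ∈ (e : Sym2 V) := Iff.rfl

@[simp]
lemma subdivision_not_adj_inl_inl (v w : V) : ¬G.subdivision.Adj (.inl v) (.inl w) := id

@[simp]
lemma subdivision_not_adj_inr_inr (e f : G.edgeSet) : ¬G.subdivision.Adj (.inr e) (.inr f) := id

lemma subdivision_commonNeighbors_inl_inr (v : V) (e : G.edgeSet) :
    G.subdivision.commonNeighbors (.inl v) (.inr e) = ∅ := by
  ext (w | f) <;> simp [commonNeighbors]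

lemma subdivision_commonNeighbors_inl_inl_of_adj {a b : V} (hab : G.Adj a b) :
    G.subdivision.commonNeighbors (.inl a) (.inl b) = {.inr ⟨s(a, b), hab⟩} := by
  ext (w | f)
  · simp [commonNeighbors]
  · simp only [commonNeighbors, Set.mem_inter_iff, mem_neighborSet, subdivision_adj_inl_inr,
      Set.mem_singleton_iff, Sum.inr.injEq]
    constructor
    · rintro ⟨ha, hb⟩
      exact Subtype.ext (Sym2.eq_of_ne_mem (G.ne_of_adj hab) ha hb (by simp) (by simp))
    · rintro rfl
      simp

lemma subdivision_neighborSet_inr_mk {a b : V} (hab : G.Adj a b) :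
    G.subdivision.neighborSet (.inr ⟨s(a, b), hab⟩) = {.inl a, .inl b} := by
  ext (w | f) <;> simp [eq_comm]

lemma subdivision_neighborSet_inl_of_subsingleton [Subsingleton G.edgeSet] {v : V}
    {e : G.edgeSet} (hv : v ∈ (e : Sym2 V)) :
    G.subdivision.neighborSet (.inl v) = {.inr e} := by
  ext (w | f)
  · simp
  · simp [Subsingleton.elim f e, hv]

end SimpleGraph

/-- for a graph `G` with at least one edge, the subdivision graph `S(G)` is not
pseudo strongly regular for any parameters. -/
theorem stmt_17 {V : Type*} [Fintype V] [DecidableEq V] (G : SimpleGraph V) [DecidableRel G.Adj]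
    (he : ∃ a b : V, G.Adj a b) :
    ∀ n k m : ℕ, ¬G.subdivision.IsPseudoSRG n k m := by
  obtain ⟨a, b, hab⟩ := he
  rintro n k m ⟨-, hk, hm⟩
  have hm_one : m = 1 := by
    rw [← hm (.inl a) (.inl b) (by simp [G.ne_of_adj hab]) (by simp),
      G.subdivision_commonNeighbors_inl_inl_of_adj hab, Set.ncard_singleton]
  have hmem : ∀ (v : V) (f : G.edgeSet), v ∈ (f : Sym2 V) := by
    intro v f
    by_contra hvf
    have hm_zero := hm (.inl v) (.inr f) (by simp) hvf
    rw [G.subdivision_commonNeighbors_inl_inr, Set.ncard_empty] at hm_zero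
    omega
  have : Subsingleton G.edgeSet := ⟨fun f f' => Subtype.ext <|
    Sym2.eq_of_ne_mem (G.ne_of_adj hab) (hmem a f) (hmem b f) (hmem a f') (hmem b f')⟩
  have hk_one := hk (.inl a)
  rw [G.subdivision_neighborSet_inl_of_subsingleton (e := ⟨s(a, b), hab⟩) (by simp),
    Set.ncard_singleton] at hk_one
  have hk_two := hk (.inr ⟨s(a, b), hab⟩)
  rw [G.subdivision_neighborSet_inr_mk hab, Set.ncard_pair (by simp [G.ne_of_adj hab])] at hk_two
  omega
end
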